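/- arXiv:1708.03099 — 11 statements merged into one kernel-verified Lean document; each statement's English description precedes it below -/
import Mathlib

section
/- Let X be a càdlàg adapted real-valued process and let T be a strictly positive, finite-valued stopping time admitting an announcing sequence (ρ_n). Assume ΔX_T ≠ 0 a.s. and that the event {ΔX_T > 0} belongs to the σ-algebra ⋁_n 𝓕_{ρ_n}. Set σ_n := ρ_n ∧ n and τ_n := T ∧ n. Then there exist random variables ξ_n, each 𝓕_{σ_n}-measurable with |ξ_n| ≤ 1 a.s., such that ξ_n → 1_{ΔX_T>0} − 1_{ΔX_T≤0} a.s. and, for every t ≥ 0, ξ_n·(X_{τ_n∧t} − X_{σ_n∧t}) → |ΔX_T|·1_{T≤t} a.s. as n → ∞; in particular the limiting profit |ΔX_T| is strictly positive a.s. (a predictable jump yields a sure profit via a flash strategy). -/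
open MeasureTheory Filter Set
open scoped NNReal Topology

/-!
Bet `ξₙ := E[1_{ΔX_T > 0} - 1_{ΔX_T ≤ 0} | 𝓕_{ρₙ ∧ n}]`. These σ-algebras increase and
generate `⋁ₙ 𝓕_{ρₙ}`, so by Lévy's upward theorem `ξₙ` converges a.s. to the sign of the jump.
Once `n ≥ T`, on `{T ≤ t}` the gain is `ξₙ (X_T - X_{ρₙ}) → sign(ΔX_T) · ΔX_T = |ΔX_T|`, since
`X_{ρₙ} → X_{T-}` as `ρₙ ↑ T` strictly from below; on `{t < T}` eventually `t < ρₙ` and `t ≤ n`,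
so the gain vanishes.
-/

namespace MeasureTheory

variable {Ω ι : Type*} {m : MeasurableSpace Ω}

def Filtration.ofStoppingTimes [Preorder ι] (F : Filtration ι m) {τ : ℕ → Ω → WithTop ι}
    (hτ : ∀ n, IsStoppingTime F (τ n)) (hmono : Monotone τ) : Filtration ℕ m where
  seq n := (hτ n).measurableSpace
  mono' _ _ hij := (hτ _).measurableSpace_mono (hτ _) (hmono hij)
  le' n := (hτ n).measurableSpace_le

namespace IsStoppingTime

variable {F : Filtration ℝ≥0 m}

theorem measurableSpace_le_iSup_min_natCast {τ : Ω → ℝ≥0}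
    (hτ : IsStoppingTime F fun ω => (τ ω : WithTop ℝ≥0)) :
    hτ.measurableSpace ≤ ⨆ j : ℕ, (hτ.min_const (j : ℝ≥0)).measurableSpace := by
  intro s hs
  have hs_eq : s = ⋃ j : ℕ, s ∩ {ω | (τ ω : WithTop ℝ≥0) ≤ ((j : ℝ≥0) : WithTop ℝ≥0)} := by
    ext ω
    simp only [mem_iUnion, mem_inter_iff, mem_ofPred_eq, WithTop.coe_le_coe]
    exact ⟨fun h => (exists_nat_ge (τ ω)).imp fun _ hj => ⟨h, hj⟩, fun ⟨_, h, _⟩ => h⟩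
  rw [hs_eq]
  refine MeasurableSet.iUnion fun j =>
    le_iSup (fun j : ℕ => (hτ.min_const (j : ℝ≥0)).measurableSpace) j _ ?_
  rw [← measurableSet_inter_le_const_iff]
  exact hs.inter (hτ.measurableSet_le' _)

theorem monotone_min_natCast {ρ : ℕ → Ω → ℝ≥0} (hρ : Monotone ρ) :
    Monotone fun n ω => min (ρ n ω : WithTop ℝ≥0) ((n : ℝ≥0) : WithTop ℝ≥0) :=
  fun _ _ hij ω =>
    min_le_min (WithTop.coe_le_coe.mpr (hρ hij ω)) (WithTop.coe_le_coe.mpr (Nat.cast_le.mpr hij))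

theorem iSup_measurableSpace_le_iSup_min_natCast {ρ : ℕ → Ω → ℝ≥0}
    (hρ : ∀ n, IsStoppingTime F fun ω => (ρ n ω : WithTop ℝ≥0)) (hmono : Monotone ρ) :
    ⨆ k, (hρ k).measurableSpace ≤
      ⨆ n, Filtration.ofStoppingTimes F (fun n => (hρ n).min_const (n : ℝ≥0))
        (monotone_min_natCast hmono) n := by
  refine iSup_le fun k => (measurableSpace_le_iSup_min_natCast (hρ k)).trans <|
    iSup_mono' fun j => ⟨max k j, ?_⟩
  exact measurableSpace_mono _ ((hρ (max k j)).min_const _) fun ω => min_le_min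
    (WithTop.coe_le_coe.mpr (hmono (le_max_left k j) ω))
    (WithTop.coe_le_coe.mpr (Nat.cast_le.mpr (le_max_right k j)))

end IsStoppingTime

end MeasureTheory

theorem tendsto_mul_sub_min_of_tendsto_nhdsLT {x : ℝ≥0 → ℝ} {T t : ℝ≥0} {L : ℝ}
    {r : ℕ → ℝ≥0} {c : ℕ → ℝ} {c₀ : ℝ} (hx : Tendsto x (𝓝[<] T) (𝓝 L))
    (hr : Tendsto r atTop (𝓝 T)) (hrT : ∀ n, r n < T) (hc : Tendsto c atTop (𝓝 c₀)) :
    Tendsto (fun n => c n * (x (min (min T n) t) - x (min (min (r n) n) t))) atTop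
      (𝓝 (c₀ * (x T - L) * if T ≤ t then 1 else 0)) := by
  obtain ⟨N, hN⟩ := exists_nat_ge (max T t)
  have hN' : ∀ᶠ n : ℕ in atTop, max T t ≤ n :=
    (eventually_ge_atTop N).mono fun n hn => hN.trans (by exact_mod_cast hn)
  split_ifs with hTt
  · have hxr : Tendsto (fun n => x (r n)) atTop (𝓝 L) :=
      hx.comp (tendsto_nhdsWithin_iff.2 ⟨hr, Eventually.of_forall hrT⟩)
    rw [mul_one]
    refine (hc.mul (tendsto_const_nhds.sub hxr)).congr' ?_
    filter_upwards [hN'] with n hn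
    have hTn : T ≤ n := (le_max_left _ _).trans hn
    rw [min_eq_left hTn, min_eq_left hTt, min_eq_left ((hrT n).le.trans hTn),
      min_eq_left ((hrT n).le.trans hTt)]
  · have htT : t < T := not_le.1 hTt
    rw [mul_zero]
    refine tendsto_const_nhds.congr' ?_
    filter_upwards [hN', hr.eventually (eventually_gt_nhds htT)] with n hn htr
    have htn : t ≤ n := (le_max_right _ _).trans hn
    rw [min_eq_right (le_min htT.le htn), min_eq_right (le_min htr.le htn), sub_self, mul_zero]

theorem ite_pos_one_neg_one_mul_self (d : ℝ) : (if 0 < d then 1 else -1) * d = |d| := by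
  split_ifs with h
  · rw [one_mul, abs_of_pos h]
  · rw [neg_one_mul, abs_of_nonpos (not_lt.1 h)]

theorem stmt0_general
    {Ω : Type*} {m : MeasurableSpace Ω} {P : Measure Ω} [IsProbabilityMeasure P]
    (F : Filtration ℝ≥0 m)
    (X Xm : ℝ≥0 → Ω → ℝ)
    -- càdlàg paths: right-continuity and existence of (finite) left limits `Xm`
    (hll : ∀ ω, ∀ t : ℝ≥0, 0 < t → Tendsto (fun s => X s ω) (𝓝[<] t) (𝓝 (Xm t ω)))
    (T : Ω → ℝ≥0)
    -- announcing sequence for `T`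
    (ρ : ℕ → Ω → ℝ≥0) (hρ : ∀ n, IsStoppingTime F (fun ω => (ρ n ω : WithTop ℝ≥0)))
    (hρmono : ∀ n, ∀ ω, ρ n ω ≤ ρ (n + 1) ω)
    (hρlt : ∀ᵐ ω ∂P, ∀ n, ρ n ω < T ω)
    (hρlim : ∀ᵐ ω ∂P, Tendsto (fun n => ρ n ω) atTop (𝓝 (T ω)))
    -- the jump at `T` is a.s. nonzero
    (hjump : ∀ᵐ ω ∂P, X (T ω) ω - Xm (T ω) ω ≠ 0)
    -- the event `{ΔX_T > 0}` is `⋁ₙ 𝓕_{ρₙ}`-measurable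
    (hpred : MeasurableSet[⨆ n, (hρ n).measurableSpace]
      {ω | 0 < X (T ω) ω - Xm (T ω) ω}) :
    ∃ ξ : ℕ → Ω → ℝ,
      (∀ n, Measurable[((hρ n).min_const (n : ℝ≥0)).measurableSpace] (ξ n)) ∧
      (∀ n, ∀ᵐ ω ∂P, |ξ n ω| ≤ 1) ∧
      (∀ᵐ ω ∂P, Tendsto (fun n => ξ n ω) atTop
        (𝓝 ((if 0 < X (T ω) ω - Xm (T ω) ω then (1 : ℝ) else 0)
          - (if X (T ω) ω - Xm (T ω) ω ≤ 0 then (1 : ℝ) else 0)))) ∧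
      (∀ t : ℝ≥0, ∀ᵐ ω ∂P,
        Tendsto (fun n =>
            ξ n ω * (X (min (min (T ω) (n : ℝ≥0)) t) ω
              - X (min (min (ρ n ω) (n : ℝ≥0)) t) ω)) atTop
          (𝓝 (|X (T ω) ω - Xm (T ω) ω| * (if T ω ≤ t then (1 : ℝ) else 0)))) ∧
      (∀ᵐ ω ∂P, 0 < |X (T ω) ω - Xm (T ω) ω|) := by
  have hmono : Monotone ρ := monotone_nat_of_le_succ fun n ω => hρmono n ω
  set 𝒢 := Filtration.ofStoppingTimes F (fun n => (hρ n).min_const (n : ℝ≥0))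
    (IsStoppingTime.monotone_min_natCast hmono)
  set g : Ω → ℝ := fun ω => if 0 < X (T ω) ω - Xm (T ω) ω then 1 else -1
  have hg : StronglyMeasurable[⨆ n, 𝒢 n] g :=
    .ite (IsStoppingTime.iSup_measurableSpace_le_iSup_min_natCast hρ hmono _ hpred)
      stronglyMeasurable_const stronglyMeasurable_const
  have hg_bdd : ∀ ω, |g ω| ≤ 1 := fun ω => by
    simp only [g]
    split_ifs <;> simp
  have hg_int : Integrable g P :=
    .of_bound (hg.mono (iSup_le 𝒢.le)).aestronglyMeasurable 1 (ae_of_all _ hg_bdd)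
  have hlevy : ∀ᵐ ω ∂P, Tendsto (fun n => P[g|𝒢 n] ω) atTop (𝓝 (g ω)) :=
    hg_int.tendsto_ae_condExp hg
  refine ⟨fun n => P[g|𝒢 n], fun n => stronglyMeasurable_condExp.measurable,
    fun n => ae_bdd_abs_condExp_of_ae_bdd_abs (m := 𝒢 n) (ae_of_all P hg_bdd),
    ?_, fun t => ?_, hjump.mono fun ω => abs_pos.mpr⟩
  · filter_upwards [hlevy] with ω hω
    convert hω using 2
    simp only [g]
    split_ifs <;> linarith
  · filter_upwards [hρlt, hρlim, hlevy] with ω hlt hlim hω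
    have hTpos : 0 < T ω := pos_of_gt (hlt 0)
    simpa only [g, ite_pos_one_neg_one_mul_self] using
      tendsto_mul_sub_min_of_tendsto_nhdsLT (t := t) (hll ω _ hTpos) hlim hlt hω

/-- A predictable jump yields a sure profit via a flash strategy:
if `T` is a strictly positive (finite-valued) stopping time with announcing sequence `ρ`,
the jump `ΔX_T = X_T - X_{T-}` is a.s. nonzero and the event `{ΔX_T > 0}` is
`⋁ₙ 𝓕_{ρₙ}`-measurable, then setting `σₙ := ρₙ ∧ n`, `τₙ := T ∧ n`, there are
`𝓕_{σₙ}`-measurable positions `ξₙ` with `|ξₙ| ≤ 1` converging a.s. to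
`1_{ΔX_T>0} - 1_{ΔX_T≤0}`, whose buy-and-hold gains converge a.s. to
`|ΔX_T|·1_{T≤t}` for every `t ≥ 0`; the limiting profit `|ΔX_T|` is a.s. strictly
positive. -/
theorem stmt0
    {Ω : Type*} {m : MeasurableSpace Ω} {P : Measure Ω} [IsProbabilityMeasure P]
    (F : Filtration ℝ≥0 m)
    (X Xm : ℝ≥0 → Ω → ℝ)
    (hadapted : Adapted F X)
    -- càdlàg paths: right-continuity and existence of (finite) left limits `Xm`
    (hrc : ∀ ω, ∀ t : ℝ≥0, Tendsto (fun s => X s ω) (𝓝[>] t) (𝓝 (X t ω)))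
    (hll : ∀ ω, ∀ t : ℝ≥0, 0 < t → Tendsto (fun s => X s ω) (𝓝[<] t) (𝓝 (Xm t ω)))
    (T : Ω → ℝ≥0) (hT : IsStoppingTime F (fun ω => (T ω : WithTop ℝ≥0)))
    (hTpos : ∀ᵐ ω ∂P, 0 < T ω)
    -- announcing sequence for `T`
    (ρ : ℕ → Ω → ℝ≥0) (hρ : ∀ n, IsStoppingTime F (fun ω => (ρ n ω : WithTop ℝ≥0)))
    (hρmono : ∀ n, ∀ ω, ρ n ω ≤ ρ (n + 1) ω)
    (hρlt : ∀ᵐ ω ∂P, ∀ n, ρ n ω < T ω)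
    (hρlim : ∀ᵐ ω ∂P, Tendsto (fun n => ρ n ω) atTop (𝓝 (T ω)))
    -- the jump at `T` is a.s. nonzero
    (hjump : ∀ᵐ ω ∂P, X (T ω) ω - Xm (T ω) ω ≠ 0)
    -- the event `{ΔX_T > 0}` is `⋁ₙ 𝓕_{ρₙ}`-measurable
    (hpred : MeasurableSet[⨆ n, (hρ n).measurableSpace]
      {ω | 0 < X (T ω) ω - Xm (T ω) ω}) :
    ∃ ξ : ℕ → Ω → ℝ,
      (∀ n, Measurable[((hρ n).min_const (n : ℝ≥0)).measurableSpace] (ξ n)) ∧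
      (∀ n, ∀ᵐ ω ∂P, |ξ n ω| ≤ 1) ∧
      (∀ᵐ ω ∂P, Tendsto (fun n => ξ n ω) atTop
        (𝓝 ((if 0 < X (T ω) ω - Xm (T ω) ω then (1 : ℝ) else 0)
          - (if X (T ω) ω - Xm (T ω) ω ≤ 0 then (1 : ℝ) else 0)))) ∧
      (∀ t : ℝ≥0, ∀ᵐ ω ∂P,
        Tendsto (fun n =>
            ξ n ω * (X (min (min (T ω) (n : ℝ≥0)) t) ω
              - X (min (min (ρ n ω) (n : ℝ≥0)) t) ω)) atTop
          (𝓝 (|X (T ω) ω - Xm (T ω) ω| * (if T ω ≤ t then (1 : ℝ) else 0)))) ∧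
      (∀ᵐ ω ∂P, 0 < |X (T ω) ω - Xm (T ω) ω|) :=
  stmt0_general F X Xm hll T ρ hρ hρmono hρlt hρlim hjump hpred
end

section
/- Let X be a càdlàg adapted real-valued process with respect to a filtration satisfying the usual conditions, and let T be a strictly positive, finite-valued stopping time admitting an announcing sequence (ρ_n). Assume ΔX_T ≠ 0 a.s. and that the random variable ΔX_T is measurable with respect to ⋁_n 𝓕_{ρ_n}. Let k ≥ 1 be such that the event A := {1/k ≤ |ΔX_T| ≤ k} has P(A) > 0. Then there exist bounded stopping times σ_n ≤ τ_n and 𝓕_{σ_n}-measurable random variables ξ_n with |ξ_n| ≤ k a.s., such that (ξ_n) converges a.s. and, for every t ≥ 0, ξ_n·(X_{τ_n∧t} − X_{σ_n∧t}) → 1_A·1_{T≤t} a.s. as n → ∞ (a fully predictable jump yields a constant profit via a flash strategy). -/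
open MeasureTheory Filter Set
open scoped NNReal Topology

/-!
Trade on `[ρₙ ∧ T ∧ n, T ∧ n]` with position `ξₙ = E[g | 𝓕_{σₙ}]`, where `g = 1_A / ΔX_T`.
Completeness of `𝓕₀` and `ρⱼ < T` a.s. give `𝓕_{ρⱼ} ≤ ⨆ₙ 𝓕_{σₙ}`, so `g` is measurable for
`⨆ₙ 𝓕_{σₙ}` and Lévy's upward theorem yields `ξₙ → g` a.s. On `{T ≤ t}` the gain is eventually
`ξₙ (X_T - X_{ρₙ}) → g ΔX_T = 1_A`, and on `{t < T}` it vanishes once `ρₙ > t`.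
-/

namespace MeasureTheory

variable {Ω ι : Type*} {m : MeasurableSpace Ω} {P : Measure Ω}

namespace IsStoppingTime

variable [LinearOrder ι] [OrderBot ι] {F : Filtration ι m}

theorem measurableSet_of_measure_eq_zero {τ : Ω → WithTop ι} (hτ : IsStoppingTime F τ)
    (hcompl : ∀ s, MeasurableSet s → P s = 0 → MeasurableSet[F ⊥] s)
    {s : Set Ω} (hs : MeasurableSet s) (hs0 : P s = 0) :
    MeasurableSet[hτ.measurableSpace] s := by
  have hbot : (isStoppingTime_const F ⊥).measurableSpace ≤ hτ.measurableSpace :=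
    (isStoppingTime_const F ⊥).measurableSpace_mono hτ fun ω => by simp
  rw [measurableSpace_const] at hbot
  exact hbot s (hcompl s hs hs0)

variable [TopologicalSpace ι] [OrderTopology ι] [SecondCountableTopology ι]

/-- A set `s ∈ 𝓕_ρ` splits into the pieces `s ∩ {ρ ≤ πₙ} ∈ 𝓕_{ρ ∧ πₙ}` and a null remainder. -/
theorem measurableSpace_le_iSup_of_ae_exists_le {ρ : Ω → WithTop ι} {π : ℕ → Ω → WithTop ι}
    (hρ : IsStoppingTime F ρ) (hπ : ∀ n, IsStoppingTime F (π n))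
    (hcompl : ∀ s, MeasurableSet s → P s = 0 → MeasurableSet[F ⊥] s)
    (hle : ∀ᵐ ω ∂P, ∃ n, ρ ω ≤ π n ω) :
    hρ.measurableSpace ≤ ⨆ n, (hπ n).measurableSpace := by
  intro s hs
  set U := ⋃ n, {ω | ρ ω ≤ π n ω}
  have hpiece : ∀ n, MeasurableSet[(hπ n).measurableSpace] (s ∩ {ω | ρ ω ≤ π n ω}) := fun n =>
    (hρ.min (hπ n)).measurableSpace_mono (hπ n) (fun ω => min_le_right _ _) _
      (hρ.measurableSet_inter_le (hπ n) s hs)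
  have hU : MeasurableSet U := MeasurableSet.iUnion fun n => by
    simpa using (hρ.min (hπ n)).measurableSpace_le _
      (hρ.measurableSet_inter_le (hπ n) univ MeasurableSet.univ)
  have hUc : P Uᶜ = 0 := by
    rw [← ae_iff.mp hle]
    congr 1
    ext ω
    simp [U]
  rw [← inter_union_sdiff s U, inter_iUnion]
  refine (MeasurableSet.iUnion fun n => le_iSup (fun n => (hπ n).measurableSpace) n _ (hpiece n)).union
    (le_iSup (fun n => (hπ n).measurableSpace) 0 _ ?_)
  exact (hπ 0).measurableSet_of_measure_eq_zero hcompl ((hρ.measurableSpace_le _ hs).diff hU)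
    (measure_mono_null (fun ω hω => hω.2) hUc)

end IsStoppingTime

def stoppingTimeFiltration [Preorder ι] {F : Filtration ι m} {σ : ℕ → Ω → WithTop ι}
    (hσ : ∀ n, IsStoppingTime F (σ n)) (hmono : Monotone σ) : Filtration ℕ m where
  seq n := (hσ n).measurableSpace
  mono' _ _ hij := (hσ _).measurableSpace_mono (hσ _) (hmono hij)
  le' n := (hσ n).measurableSpace_le

end MeasureTheory

theorem tendsto_mul_sub_min_of_announcing {x : ℝ≥0 → ℝ} {xm c : ℝ} {T t : ℝ≥0}
    {ρ : ℕ → ℝ≥0} {ξ : ℕ → ℝ} (hll : Tendsto x (𝓝[<] T) (𝓝 xm)) (hρlt : ∀ n, ρ n < T)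
    (hρlim : Tendsto ρ atTop (𝓝 T)) (hξ : Tendsto ξ atTop (𝓝 c)) :
    Tendsto (fun n : ℕ => ξ n * (x (min (min T n) t) - x (min (min (min (ρ n) T) n) t))) atTop
      (𝓝 (c * (x T - xm) * if T ≤ t then 1 else 0)) := by
  by_cases hTt : T ≤ t
  · rw [if_pos hTt, mul_one]
    have hρ' : Tendsto ρ atTop (𝓝[<] T) :=
      tendsto_nhdsWithin_of_tendsto_nhds_of_eventually_within _ hρlim (.of_forall hρlt)
    refine (hξ.mul (tendsto_const_nhds.sub (hll.comp hρ'))).congr' ?_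
    filter_upwards [eventually_ge_atTop ⌈T⌉₊] with n hn
    have hTn : T ≤ n := Nat.ceil_le.mp hn
    have hρn := (hρlt n).le
    rw [min_eq_left hTn, min_eq_left hTt, min_eq_left hρn, min_eq_left (hρn.trans hTn),
      min_eq_left (hρn.trans hTt)]
    rfl
  · rw [if_neg hTt, mul_zero]
    have htT := not_le.mp hTt
    refine tendsto_const_nhds.congr' ?_
    filter_upwards [eventually_ge_atTop ⌈t⌉₊, hρlim.eventually (eventually_gt_nhds htT)]
      with n hn hρn
    have htn : t ≤ n := Nat.ceil_le.mp hn
    rw [min_eq_right (le_min htT.le htn), min_eq_right (le_min (le_min hρn.le htT.le) htn),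
      sub_self, mul_zero]

theorem abs_indicator_inv_le {α : Type*} {f : α → ℝ} {A : Set α} {k : ℝ} (hk : 0 < k)
    (hA : ∀ a ∈ A, k⁻¹ ≤ |f a|) (a : α) : |A.indicator (fun a => (f a)⁻¹) a| ≤ k := by
  by_cases ha : a ∈ A
  · rw [indicator_of_mem ha, abs_inv]
    exact inv_le_of_inv_le₀ hk (hA a ha)
  · rw [indicator_of_notMem ha, abs_zero]
    exact hk.le

theorem indicator_inv_mul_self {α : Type*} {f : α → ℝ} (A : Set α) {a : α} (ha : f a ≠ 0) :
    A.indicator (fun a => (f a)⁻¹) a * f a = A.indicator (fun _ => 1) a := by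
  by_cases haA : a ∈ A
  · rw [indicator_of_mem haA, indicator_of_mem haA, inv_mul_cancel₀ ha]
  · rw [indicator_of_notMem haA, indicator_of_notMem haA, zero_mul]

theorem exists_le_min_min_natCast {ρ : ℕ → ℝ≥0} {T : ℝ≥0} (hmono : Monotone ρ)
    (hlt : ∀ n, ρ n < T) (j : ℕ) : ∃ n : ℕ, ρ j ≤ min (min (ρ n) T) n := by
  obtain ⟨n, hn⟩ := exists_nat_ge (ρ j)
  exact ⟨max j n, le_min (le_min (hmono (le_max_left j n)) (hlt j).le)
    (hn.trans (by exact_mod_cast le_max_right j n))⟩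

theorem stmt1_general
    {Ω : Type*} {m : MeasurableSpace Ω} {P : Measure Ω} [IsProbabilityMeasure P]
    (F : Filtration ℝ≥0 m)
    -- usual conditions: right-continuity and completeness
    (husual_compl : ∀ A : Set Ω, MeasurableSet A → P A = 0 → MeasurableSet[F 0] A)
    (X Xm : ℝ≥0 → Ω → ℝ)
    -- càdlàg paths: right-continuity and existence of (finite) left limits `Xm`
    (hll : ∀ ω, ∀ t : ℝ≥0, 0 < t → Tendsto (fun s => X s ω) (𝓝[<] t) (𝓝 (Xm t ω)))
    (T : Ω → ℝ≥0) (hT : IsStoppingTime F (fun ω => (T ω : WithTop ℝ≥0)))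
    (hTpos : ∀ᵐ ω ∂P, 0 < T ω)
    -- announcing sequence for `T`
    (ρ : ℕ → Ω → ℝ≥0) (hρ : ∀ n, IsStoppingTime F (fun ω => (ρ n ω : WithTop ℝ≥0)))
    (hρmono : ∀ n, ∀ ω, ρ n ω ≤ ρ (n + 1) ω)
    (hρlt : ∀ᵐ ω ∂P, ∀ n, ρ n ω < T ω)
    (hρlim : ∀ᵐ ω ∂P, Tendsto (fun n => ρ n ω) atTop (𝓝 (T ω)))
    -- the jump at `T` is a.s. nonzero and `⋁ₙ 𝓕_{ρₙ}`-measurable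
    (hjump : ∀ᵐ ω ∂P, X (T ω) ω - Xm (T ω) ω ≠ 0)
    (hpred : Measurable[⨆ n, (hρ n).measurableSpace]
      (fun ω => X (T ω) ω - Xm (T ω) ω))
    (k : ℝ) (hk : 1 ≤ k)
    (A : Set Ω)
    (hA : A = {ω | 1 / k ≤ |X (T ω) ω - Xm (T ω) ω| ∧ |X (T ω) ω - Xm (T ω) ω| ≤ k}) :
    ∃ (σ τ' : ℕ → Ω → ℝ≥0) (ξ : ℕ → Ω → ℝ) (hσ : ∀ n, IsStoppingTime F (fun ω => (σ n ω : WithTop ℝ≥0))),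
      (∀ n, IsStoppingTime F (fun ω => (τ' n ω : WithTop ℝ≥0))) ∧
      (∀ n, ∃ C : ℝ≥0, ∀ ω, τ' n ω ≤ C) ∧
      (∀ n, ∀ ω, σ n ω ≤ τ' n ω) ∧
      (∀ n, Measurable[(hσ n).measurableSpace] (ξ n)) ∧
      (∀ n, ∀ᵐ ω ∂P, |ξ n ω| ≤ k) ∧
      (∃ ξ' : Ω → ℝ, ∀ᵐ ω ∂P, Tendsto (fun n => ξ n ω) atTop (𝓝 (ξ' ω))) ∧
      (∀ t : ℝ≥0, ∀ᵐ ω ∂P,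
        Tendsto (fun n =>
            ξ n ω * (X (min (τ' n ω) t) ω - X (min (σ n ω) t) ω)) atTop
          (𝓝 (A.indicator (fun _ => (1 : ℝ)) ω
            * (if T ω ≤ t then (1 : ℝ) else 0)))) := by
  set D : Ω → ℝ := fun ω => X (T ω) ω - Xm (T ω) ω
  set σ : ℕ → Ω → ℝ≥0 := fun n ω => min (min (ρ n ω) (T ω)) n
  have hσ : ∀ n, IsStoppingTime F (fun ω => (σ n ω : WithTop ℝ≥0)) := fun n => by
    simpa only [σ, WithTop.coe_min] using ((hρ n).min hT).min_const (n : ℝ≥0)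
  have hρmono' : ∀ ω, Monotone (ρ · ω) := fun ω => monotone_nat_of_le_succ (hρmono · ω)
  have hσmono : Monotone fun n ω => (σ n ω : WithTop ℝ≥0) := fun i j hij ω =>
    WithTop.coe_le_coe.mpr <| min_le_min (min_le_min_right _ (hρmono' ω hij)) (by simpa)
  set G := stoppingTimeFiltration hσ hσmono
  have hρσ : ∀ j, ∀ᵐ ω ∂P, ∃ n, (ρ j ω : WithTop ℝ≥0) ≤ σ n ω := fun j => by
    filter_upwards [hρlt] with ω hω
    simpa only [WithTop.coe_le_coe] using exists_le_min_min_natCast (hρmono' ω) hω j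
  have hD : Measurable[⨆ n, G n] D := hpred.mono
    (iSup_le fun j => (hρ j).measurableSpace_le_iSup_of_ae_exists_le hσ husual_compl (hρσ j))
    le_rfl
  set g := A.indicator fun ω => (D ω)⁻¹
  have hA' : MeasurableSet[⨆ n, G n] A := hA ▸ (measurable_abs.comp hD) measurableSet_Icc
  have hg : Measurable[⨆ n, G n] g := hD.inv.indicator hA'
  have hgk : ∀ ω, |g ω| ≤ k :=
    abs_indicator_inv_le (by linarith) fun ω hω => by rw [← one_div]; exact (hA ▸ hω).1
  have hlevy : ∀ᵐ ω ∂P, Tendsto (fun n => (P[g | G n]) ω) atTop (𝓝 (g ω)) :=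
    Integrable.tendsto_ae_condExp
      ((integrable_const k).mono' (hg.mono (iSup_le G.le) le_rfl).aestronglyMeasurable
        (.of_forall hgk))
      hg.stronglyMeasurable
  refine ⟨σ, fun n ω => min (T ω) n, fun n => P[g | G n], hσ,
    fun n => by simpa only [WithTop.coe_min] using hT.min_const (n : ℝ≥0),
    fun n => ⟨n, fun ω => min_le_right _ _⟩,
    fun n ω => min_le_min (min_le_right _ _) le_rfl,
    fun n => stronglyMeasurable_condExp.measurable,
    fun n => ae_bdd_abs_condExp_of_ae_bdd_abs (.of_forall hgk),
    ⟨g, hlevy⟩, fun t => ?_⟩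
  filter_upwards [hTpos, hρlt, hρlim, hjump, hlevy] with ω hTω hρω hρlimω hjumpω hlevyω
  rw [← indicator_inv_mul_self (f := D) A hjumpω]
  exact tendsto_mul_sub_min_of_announcing (hll ω _ hTω) hρω hρlimω hlevyω

/-- A fully predictable jump yields a constant profit via a flash
strategy: if the filtration satisfies the usual conditions, `T` is a strictly positive
finite-valued stopping time with announcing sequence `ρ`, the jump `ΔX_T` is a.s.
nonzero and measurable w.r.t. `⋁ₙ 𝓕_{ρₙ}`, and `A := {1/k ≤ |ΔX_T| ≤ k}` has positive
probability for some `k ≥ 1`, then there are bounded stopping times `σₙ ≤ τₙ` and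
`𝓕_{σₙ}`-measurable positions `ξₙ` with `|ξₙ| ≤ k`, converging a.s., whose
buy-and-hold gains converge a.s. to `1_A · 1_{T ≤ t}` for every `t ≥ 0`. -/
theorem stmt1
    {Ω : Type*} {m : MeasurableSpace Ω} {P : Measure Ω} [IsProbabilityMeasure P]
    (F : Filtration ℝ≥0 m)
    -- usual conditions: right-continuity and completeness
    (husual_rc : ∀ t : ℝ≥0, F t = ⨅ (s : ℝ≥0) (_ : t < s), F s)
    (husual_compl : ∀ A : Set Ω, MeasurableSet A → P A = 0 → MeasurableSet[F 0] A)
    (X Xm : ℝ≥0 → Ω → ℝ)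
    (hadapted : Adapted F X)
    -- càdlàg paths: right-continuity and existence of (finite) left limits `Xm`
    (hrc : ∀ ω, ∀ t : ℝ≥0, Tendsto (fun s => X s ω) (𝓝[>] t) (𝓝 (X t ω)))
    (hll : ∀ ω, ∀ t : ℝ≥0, 0 < t → Tendsto (fun s => X s ω) (𝓝[<] t) (𝓝 (Xm t ω)))
    (T : Ω → ℝ≥0) (hT : IsStoppingTime F (fun ω => (T ω : WithTop ℝ≥0)))
    (hTpos : ∀ᵐ ω ∂P, 0 < T ω)
    -- announcing sequence for `T`
    (ρ : ℕ → Ω → ℝ≥0) (hρ : ∀ n, IsStoppingTime F (fun ω => (ρ n ω : WithTop ℝ≥0)))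
    (hρmono : ∀ n, ∀ ω, ρ n ω ≤ ρ (n + 1) ω)
    (hρlt : ∀ᵐ ω ∂P, ∀ n, ρ n ω < T ω)
    (hρlim : ∀ᵐ ω ∂P, Tendsto (fun n => ρ n ω) atTop (𝓝 (T ω)))
    -- the jump at `T` is a.s. nonzero and `⋁ₙ 𝓕_{ρₙ}`-measurable
    (hjump : ∀ᵐ ω ∂P, X (T ω) ω - Xm (T ω) ω ≠ 0)
    (hpred : Measurable[⨆ n, (hρ n).measurableSpace]
      (fun ω => X (T ω) ω - Xm (T ω) ω))
    (k : ℝ) (hk : 1 ≤ k)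
    (A : Set Ω)
    (hA : A = {ω | 1 / k ≤ |X (T ω) ω - Xm (T ω) ω| ∧ |X (T ω) ω - Xm (T ω) ω| ≤ k})
    (hApos : 0 < P A) :
    ∃ (σ τ' : ℕ → Ω → ℝ≥0) (ξ : ℕ → Ω → ℝ) (hσ : ∀ n, IsStoppingTime F (fun ω => (σ n ω : WithTop ℝ≥0))),
      (∀ n, IsStoppingTime F (fun ω => (τ' n ω : WithTop ℝ≥0))) ∧
      (∀ n, ∃ C : ℝ≥0, ∀ ω, τ' n ω ≤ C) ∧
      (∀ n, ∀ ω, σ n ω ≤ τ' n ω) ∧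
      (∀ n, Measurable[(hσ n).measurableSpace] (ξ n)) ∧
      (∀ n, ∀ᵐ ω ∂P, |ξ n ω| ≤ k) ∧
      (∃ ξ' : Ω → ℝ, ∀ᵐ ω ∂P, Tendsto (fun n => ξ n ω) atTop (𝓝 (ξ' ω))) ∧
      (∀ t : ℝ≥0, ∀ᵐ ω ∂P,
        Tendsto (fun n =>
            ξ n ω * (X (min (τ' n ω) t) ω - X (min (σ n ω) t) ω)) atTop
          (𝓝 (A.indicator (fun _ => (1 : ℝ)) ω
            * (if T ω ≤ t then (1 : ℝ) else 0)))) :=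
  stmt1_general F husual_compl X Xm hll T hT hTpos ρ hρ hρmono hρlt hρlim hjump hpred k hk A hA
end

section
/- Let X be a càdlàg adapted real-valued process. Let τ : Ω → [0,∞] be measurable with P(τ < ∞) > 0, let σ_n ≤ τ_n be bounded stopping times with σ_n → τ and τ_n → τ a.s., and let ξ_n be 𝓕_{σ_n}-measurable random variables with sup_n |ξ_n| ≤ M a.s. for a constant M and ξ_n → ξ a.s. Let ζ be a random variable with ζ > 0 a.s. on {τ < ∞}, and assume that almost surely, for every t ≥ 0, ξ_n·(X_{τ_n∧t} − X_{σ_n∧t}) → ζ·1_{τ≤t} as n → ∞. Then, almost surely on {τ < ∞}: τ > 0, ΔX_τ ≠ 0, ξ ≠ 0, ξ·ΔX_τ = ζ, and {τ < ∞, ΔX_τ > 0} coincides up to a null set with {τ < ∞, ξ > 0}; moreover there is a ⋁_n 𝓕_{σ_n}-measurable set equal a.s. to {τ < ∞, ΔX_τ > 0}. -/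
open MeasureTheory Filter Set
open scoped NNReal ENNReal Topology

/-!
Fix a path with `τ(ω) = T < ∞` and look at the gains at time `T`, which converge to `ζ > 0`.
If `σₙ ≥ T` happened infinitely often, the gains would vanish along those `n`; if `τₙ < T`
happened infinitely often, both `X_{σₙ}` and `X_{τₙ}` would tend to `X_{T-}` along those `n`, so
the gains would tend to `0` again. Hence eventually `σₙ < T ≤ τₙ`, the gains equal
`ξₙ (X_T - X_{σₙ}) → ξ ΔX_T`, and `ξ ΔX_T = ζ`. In particular `ξ` and `ΔX_T` have the same sign,
and since `σₙ → τ` and `ξₙ → ξ`, the event `{τ < ∞, ξ > 0}` is a.s. read off from the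
`⋁ₙ 𝓕_{σₙ}`-measurable quantities `liminf σₙ` and `liminf ξₙ`.
-/

section FlashGain

variable {x : ℝ≥0 → ℝ} {l : ℝ} {T : ℝ≥0} {s u : ℕ → ℝ≥0} {c : ℕ → ℝ} {c₀ z : ℝ}

theorem eventually_lt_of_tendsto_gain (hsu : ∀ n, s n ≤ u n) (hz : z ≠ 0)
    (hgain : Tendsto (fun n => c n * (x (min (u n) T) - x (min (s n) T))) atTop (𝓝 z)) :
    ∀ᶠ n in atTop, s n < T := by
  by_contra hfreq
  simp only [not_eventually, not_lt] at hfreq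
  have := frequently_iff_neBot.mp hfreq
  have hzero : (fun n => c n * (x (min (u n) T) - x (min (s n) T)))
      =ᶠ[atTop ⊓ 𝓟 {n | T ≤ s n}] fun _ => 0 := by
    filter_upwards [mem_inf_of_right (mem_principal_self _)] with n hn
    rw [min_eq_right ((show T ≤ s n from hn).trans (hsu n)), min_eq_right hn, sub_self,
      mul_zero]
  exact hz (tendsto_nhds_unique (hgain.mono_left inf_le_left)
    (tendsto_const_nhds.congr' hzero.symm))

theorem eventually_le_of_tendsto_gain (hll : Tendsto x (𝓝[<] T) (𝓝 l))
    (hsu : ∀ n, s n ≤ u n) (hs : Tendsto s atTop (𝓝 T)) (hu : Tendsto u atTop (𝓝 T))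
    (hc : Tendsto c atTop (𝓝 c₀)) (hz : z ≠ 0)
    (hgain : Tendsto (fun n => c n * (x (min (u n) T) - x (min (s n) T))) atTop (𝓝 z)) :
    ∀ᶠ n in atTop, T ≤ u n := by
  by_contra hfreq
  simp only [not_eventually, not_le] at hfreq
  have := frequently_iff_neBot.mp hfreq
  set L := atTop ⊓ 𝓟 {n | u n < T}
  have hu_lt : ∀ᶠ n in L, u n < T := mem_inf_of_right (mem_principal_self _)
  have hu' : Tendsto u L (𝓝[<] T) :=
    tendsto_nhdsWithin_iff.mpr ⟨hu.mono_left inf_le_left, hu_lt⟩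
  have hs' : Tendsto s L (𝓝[<] T) :=
    tendsto_nhdsWithin_iff.mpr ⟨hs.mono_left inf_le_left,
      hu_lt.mono fun n hn => (hsu n).trans_lt hn⟩
  have hlim : Tendsto (fun n => c n * (x (min (u n) T) - x (min (s n) T))) L
      (𝓝 (c₀ * (l - l))) := by
    refine ((hc.mono_left inf_le_left).mul ((hll.comp hu').sub (hll.comp hs'))).congr' ?_
    filter_upwards [hu_lt] with n hn
    simp only [Function.comp_apply, min_eq_left hn.le, min_eq_left ((hsu n).trans hn.le)]
  rw [sub_self, mul_zero] at hlim
  exact hz (tendsto_nhds_unique (hgain.mono_left inf_le_left) hlim)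

theorem mul_jump_eq_of_tendsto_gain (hll : Tendsto x (𝓝[<] T) (𝓝 l))
    (hsu : ∀ n, s n ≤ u n) (hs : Tendsto s atTop (𝓝 T)) (hu : Tendsto u atTop (𝓝 T))
    (hc : Tendsto c atTop (𝓝 c₀)) (hz : z ≠ 0)
    (hgain : Tendsto (fun n => c n * (x (min (u n) T) - x (min (s n) T))) atTop (𝓝 z)) :
    c₀ * (x T - l) = z := by
  have hs_lt := eventually_lt_of_tendsto_gain hsu hz hgain
  have hu_ge := eventually_le_of_tendsto_gain hll hsu hs hu hc hz hgain
  have hs' : Tendsto s atTop (𝓝[<] T) := tendsto_nhdsWithin_iff.mpr ⟨hs, hs_lt⟩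
  refine tendsto_nhds_unique (hc.mul (tendsto_const_nhds.sub (hll.comp hs'))) (hgain.congr' ?_)
  filter_upwards [hs_lt, hu_ge] with n hsn hun
  rw [min_eq_right hun, min_eq_left hsn.le, Function.comp_apply]

theorem jump_of_tendsto_gain {xm : ℝ≥0 → ℝ}
    (hll : ∀ t : ℝ≥0, 0 < t → Tendsto x (𝓝[<] t) (𝓝 (xm t))) {a : ℝ≥0∞} (ha : a < ∞)
    (hsu : ∀ n, s n ≤ u n) (hs : Tendsto (fun n => (s n : ℝ≥0∞)) atTop (𝓝 a))
    (hu : Tendsto (fun n => (u n : ℝ≥0∞)) atTop (𝓝 a)) (hc : Tendsto c atTop (𝓝 c₀))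
    (hz : 0 < z)
    (hgain : ∀ t : ℝ≥0, Tendsto (fun n => c n * (x (min (u n) t) - x (min (s n) t))) atTop
      (𝓝 (if a ≤ (t : ℝ≥0∞) then z else 0))) :
    0 < a ∧ x a.toNNReal - xm a.toNNReal ≠ 0 ∧ c₀ ≠ 0 ∧
      c₀ * (x a.toNNReal - xm a.toNNReal) = z := by
  lift a to ℝ≥0 using ha.ne
  rw [ENNReal.tendsto_coe] at hs hu
  have hgainT := hgain a
  rw [if_pos le_rfl] at hgainT
  obtain ⟨n, hn⟩ := (eventually_lt_of_tendsto_gain hsu hz.ne' hgainT).exists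
  have ha_pos : 0 < a := pos_of_gt hn
  have hjump : c₀ * (x a - xm a) = z :=
    mul_jump_eq_of_tendsto_gain (hll a ha_pos) hsu hs hu hc hz.ne' hgainT
  simp only [ENNReal.toNNReal_coe, ENNReal.coe_pos]
  refine ⟨ha_pos, fun h => ?_, fun h => ?_, hjump⟩ <;> simp [h, hz.ne] at hjump

end FlashGain

theorem measurableSet_liminf_lt_top_and_pos {Ω : Type*} {m : MeasurableSpace Ω}
    {s : ℕ → Ω → ℝ≥0} {c : ℕ → Ω → ℝ} (hs : ∀ n, Measurable (s n))
    (hc : ∀ n, Measurable (c n)) :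
    MeasurableSet {ω | liminf (fun n => (s n ω : ℝ≥0∞)) atTop < ∞ ∧
      0 < liminf (fun n => c n ω) atTop} :=
  (measurableSet_lt (Measurable.liminf fun n => (hs n).coe_nnreal_ennreal) measurable_const).inter
    (measurableSet_lt measurable_const (Measurable.liminf hc))

theorem stmt2_general
    {Ω : Type*} {m : MeasurableSpace Ω} {P : Measure Ω}
    (F : Filtration ℝ≥0 m)
    (X Xm : ℝ≥0 → Ω → ℝ)
    -- càdlàg paths: right-continuity and existence of (finite) left limits `Xm`
    (hll : ∀ ω, ∀ t : ℝ≥0, 0 < t → Tendsto (fun s => X s ω) (𝓝[<] t) (𝓝 (Xm t ω)))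
    (τ : Ω → ℝ≥0∞)
    (σ τ' : ℕ → Ω → ℝ≥0)
    (hσ : ∀ n, IsStoppingTime F (fun ω => ((σ n ω : ℝ≥0) : WithTop ℝ≥0)))
    (hle : ∀ n, ∀ ω, σ n ω ≤ τ' n ω)
    (hσlim : ∀ᵐ ω ∂P, Tendsto (fun n => (σ n ω : ℝ≥0∞)) atTop (𝓝 (τ ω)))
    (hτ'lim : ∀ᵐ ω ∂P, Tendsto (fun n => (τ' n ω : ℝ≥0∞)) atTop (𝓝 (τ ω)))
    (ξ : ℕ → Ω → ℝ) (hξmeas : ∀ n, Measurable[(hσ n).measurableSpace] (ξ n))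
    (ξ' : Ω → ℝ) (hξlim : ∀ᵐ ω ∂P, Tendsto (fun n => ξ n ω) atTop (𝓝 (ξ' ω)))
    (ζ : Ω → ℝ) (hζpos : ∀ᵐ ω ∂P, τ ω < ∞ → 0 < ζ ω)
    (hgains : ∀ᵐ ω ∂P, ∀ t : ℝ≥0,
      Tendsto (fun n =>
          ξ n ω * (X (min (τ' n ω) t) ω - X (min (σ n ω) t) ω)) atTop
        (𝓝 (if τ ω ≤ (t : ℝ≥0∞) then ζ ω else 0))) :
    (∀ᵐ ω ∂P, τ ω < ∞ →
      (0 < τ ω ∧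
        X (τ ω).toNNReal ω - Xm (τ ω).toNNReal ω ≠ 0 ∧
        ξ' ω ≠ 0 ∧
        ξ' ω * (X (τ ω).toNNReal ω - Xm (τ ω).toNNReal ω) = ζ ω)) ∧
    (∀ᵐ ω ∂P,
      ((τ ω < ∞ ∧ 0 < X (τ ω).toNNReal ω - Xm (τ ω).toNNReal ω) ↔
        (τ ω < ∞ ∧ 0 < ξ' ω))) ∧
    (∃ B : Set Ω, MeasurableSet[⨆ n, (hσ n).measurableSpace] B ∧
      ∀ᵐ ω ∂P, (ω ∈ B ↔
        (τ ω < ∞ ∧ 0 < X (τ ω).toNNReal ω - Xm (τ ω).toNNReal ω))) := by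
  have hjump : ∀ᵐ ω ∂P, τ ω < ∞ →
      (0 < τ ω ∧
        X (τ ω).toNNReal ω - Xm (τ ω).toNNReal ω ≠ 0 ∧
        ξ' ω ≠ 0 ∧
        ξ' ω * (X (τ ω).toNNReal ω - Xm (τ ω).toNNReal ω) = ζ ω) := by
    filter_upwards [hσlim, hτ'lim, hξlim, hζpos, hgains] with ω hσω hτω hξω hζω hgω hfin
    exact jump_of_tendsto_gain (hll ω) hfin (fun n => hle n ω) hσω hτω hξω (hζω hfin) hgω
  have hsign : ∀ᵐ ω ∂P,
      ((τ ω < ∞ ∧ 0 < X (τ ω).toNNReal ω - Xm (τ ω).toNNReal ω) ↔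
        (τ ω < ∞ ∧ 0 < ξ' ω)) := by
    filter_upwards [hjump, hζpos] with ω hjω hζω
    refine and_congr_right fun hfin => (pos_iff_pos_of_mul_pos ?_).symm
    exact (hjω hfin).2.2.2 ▸ hζω hfin
  have hσm : ∀ n, Measurable[⨆ n, (hσ n).measurableSpace] (σ n) := fun n =>
    ((hσ n).measurable.mono (le_iSup (fun n => (hσ n).measurableSpace) n) le_rfl).untopD 0
  have hξm : ∀ n, Measurable[⨆ n, (hσ n).measurableSpace] (ξ n) := fun n =>
    (hξmeas n).mono (le_iSup (fun n => (hσ n).measurableSpace) n) le_rfl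
  refine ⟨hjump, hsign, _, measurableSet_liminf_lt_top_and_pos hσm hξm, ?_⟩
  filter_upwards [hsign, hσlim, hξlim] with ω hω hσω hξω
  rw [hσω.liminf_eq, hξω.liminf_eq, hω]

/-- A sure profit via a flash strategy forces a predictable jump:
if the gains `ξₙ·(X_{τₙ∧t} - X_{σₙ∧t})` of a flash strategy converge a.s. to
`ζ·1_{τ≤t}` for all `t`, with `ζ > 0` on `{τ < ∞}`, then a.s. on `{τ < ∞}` one has
`τ > 0`, `ΔX_τ ≠ 0`, `ξ ≠ 0`, `ξ·ΔX_τ = ζ`, the events `{τ<∞, ΔX_τ>0}` and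
`{τ<∞, ξ>0}` coincide up to a null set, and `{τ<∞, ΔX_τ>0}` agrees a.s. with a
`⋁ₙ 𝓕_{σₙ}`-measurable set. -/
theorem stmt2
    {Ω : Type*} {m : MeasurableSpace Ω} {P : Measure Ω} [IsProbabilityMeasure P]
    (F : Filtration ℝ≥0 m)
    (X Xm : ℝ≥0 → Ω → ℝ)
    (hadapted : Adapted F X)
    -- càdlàg paths: right-continuity and existence of (finite) left limits `Xm`
    (hrc : ∀ ω, ∀ t : ℝ≥0, Tendsto (fun s => X s ω) (𝓝[>] t) (𝓝 (X t ω)))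
    (hll : ∀ ω, ∀ t : ℝ≥0, 0 < t → Tendsto (fun s => X s ω) (𝓝[<] t) (𝓝 (Xm t ω)))
    (τ : Ω → ℝ≥0∞) (hτ : Measurable τ) (hτfin : 0 < P {ω | τ ω < ∞})
    (σ τ' : ℕ → Ω → ℝ≥0)
    (hσ : ∀ n, IsStoppingTime F (fun ω => ((σ n ω : ℝ≥0) : WithTop ℝ≥0)))
    (hτ' : ∀ n, IsStoppingTime F (fun ω => ((τ' n ω : ℝ≥0) : WithTop ℝ≥0)))
    (hσbdd : ∀ n, ∃ C : ℝ≥0, ∀ ω, σ n ω ≤ C)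
    (hτ'bdd : ∀ n, ∃ C : ℝ≥0, ∀ ω, τ' n ω ≤ C)
    (hle : ∀ n, ∀ ω, σ n ω ≤ τ' n ω)
    (hσlim : ∀ᵐ ω ∂P, Tendsto (fun n => (σ n ω : ℝ≥0∞)) atTop (𝓝 (τ ω)))
    (hτ'lim : ∀ᵐ ω ∂P, Tendsto (fun n => (τ' n ω : ℝ≥0∞)) atTop (𝓝 (τ ω)))
    (ξ : ℕ → Ω → ℝ) (hξmeas : ∀ n, Measurable[(hσ n).measurableSpace] (ξ n))
    (M : ℝ) (hξbdd : ∀ᵐ ω ∂P, ∀ n, |ξ n ω| ≤ M)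
    (ξ' : Ω → ℝ) (hξlim : ∀ᵐ ω ∂P, Tendsto (fun n => ξ n ω) atTop (𝓝 (ξ' ω)))
    (ζ : Ω → ℝ) (hζpos : ∀ᵐ ω ∂P, τ ω < ∞ → 0 < ζ ω)
    (hgains : ∀ᵐ ω ∂P, ∀ t : ℝ≥0,
      Tendsto (fun n =>
          ξ n ω * (X (min (τ' n ω) t) ω - X (min (σ n ω) t) ω)) atTop
        (𝓝 (if τ ω ≤ (t : ℝ≥0∞) then ζ ω else 0))) :
    (∀ᵐ ω ∂P, τ ω < ∞ →
      (0 < τ ω ∧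
        X (τ ω).toNNReal ω - Xm (τ ω).toNNReal ω ≠ 0 ∧
        ξ' ω ≠ 0 ∧
        ξ' ω * (X (τ ω).toNNReal ω - Xm (τ ω).toNNReal ω) = ζ ω)) ∧
    (∀ᵐ ω ∂P,
      ((τ ω < ∞ ∧ 0 < X (τ ω).toNNReal ω - Xm (τ ω).toNNReal ω) ↔
        (τ ω < ∞ ∧ 0 < ξ' ω))) ∧
    (∃ B : Set Ω, MeasurableSet[⨆ n, (hσ n).measurableSpace] B ∧
      ∀ᵐ ω ∂P, (ω ∈ B ↔
        (τ ω < ∞ ∧ 0 < X (τ ω).toNNReal ω - Xm (τ ω).toNNReal ω))) :=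
  stmt2_general F X Xm hll τ σ τ' hσ hle hσlim hτ'lim ξ hξmeas ξ' hξlim ζ hζpos hgains
end

section
/- Let X be a càdlàg adapted real-valued process. Let τ : Ω → [0,∞] be measurable with P(τ < ∞) > 0, let σ_n ≤ τ_n be bounded stopping times with σ_n → τ and τ_n → τ a.s., and let ξ_n be 𝓕_{σ_n}-measurable random variables with sup_n |ξ_n| ≤ M a.s. for a constant M and ξ_n → ξ a.s. Let c > 0 be a constant and assume that almost surely, for every t ≥ 0, ξ_n·(X_{τ_n∧t} − X_{σ_n∧t}) → c·1_{τ≤t} as n → ∞. Then, almost surely on {τ < ∞}: ΔX_τ ≠ 0, ξ ≠ 0 and ΔX_τ = c/ξ; moreover there is a ⋁_n 𝓕_{σ_n}-measurable random variable equal a.s. to ΔX_τ·1_{τ<∞} (a constant profit via a flash strategy forces a fully predictable jump). -/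
open MeasureTheory Filter Set
open scoped NNReal ENNReal Topology

/-!
Fix a path with `τ(ω) = t < ∞`. If `t ≤ σₙ` the gain at time `t` vanishes, and if `τₙ < t` it is
`ξₙ (X_{τₙ} - X_{σₙ})`, which tends to `ξ · (X_{t-} - X_{t-}) = 0` along such `n`. Since the gains
tend to `c ≠ 0`, eventually `σₙ < t ≤ τₙ`, so the gain is `ξₙ (X_t - X_{σₙ}) → ξ ΔX_t`, whence
`ξ ΔX_t = c`. Finally `ΔX_τ 1_{τ<∞} = 1_{τ<∞} c / ξ` a.s., and both `τ = lim σₙ` and `ξ = lim ξₙ`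
are (a.s. equal to) `⋁ₙ 𝓕_{σₙ}`-measurable liminfs.
-/

/-- The gain at time `t` of holding `a` units of the asset with path `f` between `s` and `u`. -/
def flashGain {ι : Type*} [LinearOrder ι] (f : ι → ℝ) (a : ℝ) (s u t : ι) : ℝ :=
  a * (f (min u t) - f (min s t))

section FlashGain

variable {ι β : Type*} [LinearOrder ι] {l : Filter β}
  {f : ι → ℝ} {a : β → ℝ} {s u : β → ι} {t : ι} {c : ℝ}

lemma flashGain_eq_zero_of_le {a : ℝ} {s u : ι} (hsu : s ≤ u) (hts : t ≤ s) :
    flashGain f a s u t = 0 := by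
  simp only [flashGain, min_eq_right hts, min_eq_right (hts.trans hsu), sub_self, mul_zero]

lemma eventually_lt_of_tendsto_flashGain (hsu : ∀ n, s n ≤ u n) (hc : c ≠ 0)
    (hgain : Tendsto (fun n => flashGain f (a n) (s n) (u n) t) l (𝓝 c)) :
    ∀ᶠ n in l, s n < t := by
  filter_upwards [hgain.eventually_ne hc] with n hn
  by_contra! hts
  exact hn (flashGain_eq_zero_of_le (hsu n) hts)

lemma eventually_le_of_tendsto_flashGain [TopologicalSpace ι] {a₀ ℓ : ℝ}
    (hsu : ∀ n, s n ≤ u n) (hc : c ≠ 0) (hs : Tendsto s l (𝓝 t)) (hu : Tendsto u l (𝓝 t))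
    (ha : Tendsto a l (𝓝 a₀)) (hℓ : Tendsto f (𝓝[<] t) (𝓝 ℓ))
    (hgain : Tendsto (fun n => flashGain f (a n) (s n) (u n) t) l (𝓝 c)) :
    ∀ᶠ n in l, t ≤ u n := by
  by_contra hfreq
  simp only [not_eventually, not_le] at hfreq
  set l' := l ⊓ 𝓟 {n | u n < t}
  have : l'.NeBot := frequently_iff_neBot.mp hfreq
  have hl' : l' ≤ l := inf_le_left
  have hu_lt : ∀ᶠ n in l', u n < t := mem_inf_of_right (mem_principal_self _)
  have hs_lt : ∀ᶠ n in l', s n < t := hu_lt.mono fun n h => (hsu n).trans_lt h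
  have hzero : Tendsto (fun n => flashGain f (a n) (s n) (u n) t) l' (𝓝 (a₀ * (ℓ - ℓ))) := by
    have hfu := hℓ.comp (tendsto_nhdsWithin_of_tendsto_nhds_of_eventually_within _
      (hu.mono_left hl') hu_lt)
    have hfs := hℓ.comp (tendsto_nhdsWithin_of_tendsto_nhds_of_eventually_within _
      (hs.mono_left hl') hs_lt)
    refine ((ha.mono_left hl').mul (hfu.sub hfs)).congr' ?_
    filter_upwards [hu_lt, hs_lt] with n hun hsn
    simp only [flashGain, Function.comp, min_eq_left hun.le, min_eq_left hsn.le]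
  rw [sub_self, mul_zero] at hzero
  exact hc (tendsto_nhds_unique (hgain.mono_left hl') hzero)

lemma mul_sub_leftLim_eq_of_tendsto_flashGain [TopologicalSpace ι] [l.NeBot] {a₀ ℓ : ℝ}
    (hsu : ∀ n, s n ≤ u n) (hc : c ≠ 0) (hs : Tendsto s l (𝓝 t)) (hu : Tendsto u l (𝓝 t))
    (ha : Tendsto a l (𝓝 a₀)) (hℓ : Tendsto f (𝓝[<] t) (𝓝 ℓ))
    (hgain : Tendsto (fun n => flashGain f (a n) (s n) (u n) t) l (𝓝 c)) :
    a₀ * (f t - ℓ) = c := by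
  have hs_lt := eventually_lt_of_tendsto_flashGain hsu hc hgain
  have hu_ge := eventually_le_of_tendsto_flashGain hsu hc hs hu ha hℓ hgain
  have hfs := hℓ.comp (tendsto_nhdsWithin_of_tendsto_nhds_of_eventually_within _ hs hs_lt)
  refine tendsto_nhds_unique ?_ hgain
  refine (ha.mul (tendsto_const_nhds.sub hfs)).congr' ?_
  filter_upwards [hs_lt, hu_ge] with n hsn hun
  simp only [flashGain, Function.comp, min_eq_right hun, min_eq_left hsn.le]

end FlashGain

lemma mul_jump_eq_of_tendsto_flashGain {f fm : ℝ≥0 → ℝ}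
    (hll : ∀ t : ℝ≥0, 0 < t → Tendsto f (𝓝[<] t) (𝓝 (fm t))) {τ : ℝ≥0∞} (hτ : τ < ∞)
    {s u : ℕ → ℝ≥0} {a : ℕ → ℝ} {a₀ c : ℝ} (hsu : ∀ n, s n ≤ u n) (hc : c ≠ 0)
    (hs : Tendsto (fun n => (s n : ℝ≥0∞)) atTop (𝓝 τ))
    (hu : Tendsto (fun n => (u n : ℝ≥0∞)) atTop (𝓝 τ)) (ha : Tendsto a atTop (𝓝 a₀))
    (hgain : Tendsto (fun n => flashGain f (a n) (s n) (u n) τ.toNNReal) atTop (𝓝 c)) :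
    a₀ * (f τ.toNNReal - fm τ.toNNReal) = c := by
  rw [← ENNReal.coe_toNNReal hτ.ne, ENNReal.tendsto_coe] at hs hu
  have hℓ : Tendsto f (𝓝[<] τ.toNNReal) (𝓝 (fm τ.toNNReal)) := by
    rcases eq_zero_or_pos τ.toNNReal with h0 | hpos
    · simp [h0]
    · exact hll _ hpos
  exact mul_sub_leftLim_eq_of_tendsto_flashGain hsu hc hs hu ha hℓ hgain

theorem stmt3_general
    {Ω : Type*} {m : MeasurableSpace Ω} {P : Measure Ω}
    (F : Filtration ℝ≥0 m)
    (X Xm : ℝ≥0 → Ω → ℝ)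
    (hll : ∀ ω, ∀ t : ℝ≥0, 0 < t → Tendsto (fun s => X s ω) (𝓝[<] t) (𝓝 (Xm t ω)))
    (τ : Ω → ℝ≥0∞)
    (σ τ' : ℕ → Ω → ℝ≥0)
    (hσ : ∀ n, IsStoppingTime F (fun ω => (σ n ω : WithTop ℝ≥0)))
    (hle : ∀ n, ∀ ω, σ n ω ≤ τ' n ω)
    (hσlim : ∀ᵐ ω ∂P, Tendsto (fun n => (σ n ω : ℝ≥0∞)) atTop (𝓝 (τ ω)))
    (hτ'lim : ∀ᵐ ω ∂P, Tendsto (fun n => (τ' n ω : ℝ≥0∞)) atTop (𝓝 (τ ω)))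
    (ξ : ℕ → Ω → ℝ) (hξmeas : ∀ n, Measurable[(hσ n).measurableSpace] (ξ n))
    (ξ' : Ω → ℝ) (hξlim : ∀ᵐ ω ∂P, Tendsto (fun n => ξ n ω) atTop (𝓝 (ξ' ω)))
    (c : ℝ) (hc : 0 < c)
    (hgains : ∀ᵐ ω ∂P, ∀ t : ℝ≥0,
      Tendsto (fun n =>
          ξ n ω * (X (min (τ' n ω) t) ω - X (min (σ n ω) t) ω)) atTop
        (𝓝 (if τ ω ≤ (t : ℝ≥0∞) then c else 0))) :
    (∀ᵐ ω ∂P, τ ω < ∞ →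
      (X (τ ω).toNNReal ω - Xm (τ ω).toNNReal ω ≠ 0 ∧
        ξ' ω ≠ 0 ∧
        X (τ ω).toNNReal ω - Xm (τ ω).toNNReal ω = c / ξ' ω)) ∧
    (∃ g : Ω → ℝ, Measurable[⨆ n, (hσ n).measurableSpace] g ∧
      ∀ᵐ ω ∂P, g ω =
        (if τ ω < ∞ then X (τ ω).toNNReal ω - Xm (τ ω).toNNReal ω else 0)) := by
  have hjump : ∀ᵐ ω ∂P, τ ω < ∞ →
      ξ' ω * (X (τ ω).toNNReal ω - Xm (τ ω).toNNReal ω) = c := by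
    filter_upwards [hσlim, hτ'lim, hξlim, hgains] with ω hσω hτ'ω hξω hgω hτω
    refine mul_jump_eq_of_tendsto_flashGain (hll ω) hτω (hle · ω) hc.ne' hσω hτ'ω hξω ?_
    simpa [flashGain, ENNReal.coe_toNNReal hτω.ne] using hgω (τ ω).toNNReal
  refine ⟨hjump.mono fun ω hj hτω => ?_, ?_⟩
  · obtain ⟨hξ', hΔ⟩ := mul_ne_zero_iff.mp ((hj hτω).symm ▸ hc.ne')
    exact ⟨hΔ, hξ', eq_div_of_mul_eq hξ' (by rw [mul_comm, hj hτω])⟩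
  have hle_iSup n := le_iSup (fun n => (hσ n).measurableSpace) n
  have hσm n : Measurable[⨆ n, (hσ n).measurableSpace] fun ω => (σ n ω : ℝ≥0∞) :=
    (hσ n).measurable.mono (hle_iSup n) le_rfl
  have hξm n := (hξmeas n).mono (hle_iSup n) le_rfl
  refine ⟨fun ω => if liminf (fun n => (σ n ω : ℝ≥0∞)) atTop < ∞
    then c / liminf (fun n => ξ n ω) atTop else 0, ?_, ?_⟩
  · exact Measurable.ite (measurableSet_lt (Measurable.liminf hσm) measurable_const)
      (measurable_const.div (Measurable.liminf hξm)) measurable_const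
  · filter_upwards [hjump, hσlim, hξlim] with ω hj hσω hξω
    simp only [hσω.liminf_eq, hξω.liminf_eq]
    split_ifs with hτω
    · rw [← hj hτω, mul_div_cancel_left₀ _ (left_ne_zero_of_mul (hj hτω ▸ hc.ne'))]
    · rfl

/-- A constant profit via a flash strategy forces a fully
predictable jump: if the gains of a flash strategy converge a.s. to `c·1_{τ≤t}`
for all `t`, with `c > 0` constant, then a.s. on `{τ < ∞}` one has `ΔX_τ ≠ 0`,
`ξ ≠ 0` and `ΔX_τ = c/ξ`; moreover there is a `⋁ₙ 𝓕_{σₙ}`-measurable random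
variable equal a.s. to `ΔX_τ·1_{τ<∞}`. -/
theorem stmt3
    {Ω : Type*} {m : MeasurableSpace Ω} {P : Measure Ω} [IsProbabilityMeasure P]
    (F : Filtration ℝ≥0 m)
    (X Xm : ℝ≥0 → Ω → ℝ)
    (hadapted : Adapted F X)
    -- càdlàg paths: right-continuity and existence of (finite) left limits `Xm`
    (hrc : ∀ ω, ∀ t : ℝ≥0, Tendsto (fun s => X s ω) (𝓝[>] t) (𝓝 (X t ω)))
    (hll : ∀ ω, ∀ t : ℝ≥0, 0 < t → Tendsto (fun s => X s ω) (𝓝[<] t) (𝓝 (Xm t ω)))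
    (τ : Ω → ℝ≥0∞) (hτ : Measurable τ) (hτfin : 0 < P {ω | τ ω < ∞})
    (σ τ' : ℕ → Ω → ℝ≥0)
    (hσ : ∀ n, IsStoppingTime F (fun ω => (σ n ω : WithTop ℝ≥0)))
    (hτ' : ∀ n, IsStoppingTime F (fun ω => (τ' n ω : WithTop ℝ≥0)))
    (hσbdd : ∀ n, ∃ C : ℝ≥0, ∀ ω, σ n ω ≤ C)
    (hτ'bdd : ∀ n, ∃ C : ℝ≥0, ∀ ω, τ' n ω ≤ C)
    (hle : ∀ n, ∀ ω, σ n ω ≤ τ' n ω)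
    (hσlim : ∀ᵐ ω ∂P, Tendsto (fun n => (σ n ω : ℝ≥0∞)) atTop (𝓝 (τ ω)))
    (hτ'lim : ∀ᵐ ω ∂P, Tendsto (fun n => (τ' n ω : ℝ≥0∞)) atTop (𝓝 (τ ω)))
    (ξ : ℕ → Ω → ℝ) (hξmeas : ∀ n, Measurable[(hσ n).measurableSpace] (ξ n))
    (M : ℝ) (hξbdd : ∀ᵐ ω ∂P, ∀ n, |ξ n ω| ≤ M)
    (ξ' : Ω → ℝ) (hξlim : ∀ᵐ ω ∂P, Tendsto (fun n => ξ n ω) atTop (𝓝 (ξ' ω)))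
    (c : ℝ) (hc : 0 < c)
    (hgains : ∀ᵐ ω ∂P, ∀ t : ℝ≥0,
      Tendsto (fun n =>
          ξ n ω * (X (min (τ' n ω) t) ω - X (min (σ n ω) t) ω)) atTop
        (𝓝 (if τ ω ≤ (t : ℝ≥0∞) then c else 0))) :
    (∀ᵐ ω ∂P, τ ω < ∞ →
      (X (τ ω).toNNReal ω - Xm (τ ω).toNNReal ω ≠ 0 ∧
        ξ' ω ≠ 0 ∧
        X (τ ω).toNNReal ω - Xm (τ ω).toNNReal ω = c / ξ' ω)) ∧
    (∃ g : Ω → ℝ, Measurable[⨆ n, (hσ n).measurableSpace] g ∧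
      ∀ᵐ ω ∂P, g ω =
        (if τ ω < ∞ then X (τ ω).toNNReal ω - Xm (τ ω).toNNReal ω else 0)) :=
  stmt3_general F X Xm hll τ σ τ' hσ hle hσlim hτ'lim ξ hξmeas ξ' hξlim c hc hgains
end

section
/- Let X be a càdlàg adapted real-valued process. Let τ : Ω → [0,∞] be measurable with P(τ < ∞) > 0, let σ_n ≤ τ_n be bounded stopping times with σ_n → τ and τ_n → τ a.s., let ξ_n be 𝓕_{σ_n}-measurable with sup_n |ξ_n| ≤ M a.s. and ξ_n → ξ a.s., and let ζ satisfy ζ > 0 a.s. on {τ < ∞}; assume that almost surely, for every t ≥ 0, ξ_n·(X_{τ_n∧t} − X_{σ_n∧t}) → ζ·1_{τ≤t}. Define A_n := {σ_n < τ ≤ τ_n} ∩ {ξ_n ≠ 0}. Then 1_{A_n} → 1_{τ<∞} almost surely as n → ∞; that is, a.s. on {τ < ∞} one has σ_n < τ ≤ τ_n and ξ_n ≠ 0 for all sufficiently large n, while a.s. on {τ = ∞} the event A_n fails for every n. -/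
/-!
Work on one path where all the almost-sure hypotheses hold and `τ = r < ∞`. At time `r` the gains
`ξₙ (X_{τₙ ∧ r} - X_{σₙ ∧ r})` tend to `ζ > 0`, so they are eventually nonzero; this forces
`ξₙ ≠ 0` and `σₙ < r`, because `σₙ ≥ r` would make both stopped values equal to `X_r`. If `τₙ < r`
held infinitely often, then along those `n` both `σₙ ≤ τₙ` would approach `r` strictly from the
left, so `X_{τₙ} - X_{σₙ} → X_{r-} - X_{r-} = 0` and the bounded factors `ξₙ` would drive the gains
to `0 ≠ ζ`. On `{τ = ∞}` the inequality `τ ≤ τₙ` fails because `τₙ` is finite.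
-/

open MeasureTheory Filter Set
open scoped NNReal ENNReal Topology

section Pathwise

variable {α ι : Type*} [LinearOrder α] {l : Filter ι}
  {x : α → ℝ} {r : α} {s t : ι → α} {c : ι → ℝ} {z : ℝ}

theorem eventually_lt_and_ne_zero_of_tendsto_mul_sub (hst : ∀ i, s i ≤ t i) (hz : z ≠ 0)
    (hgain : Tendsto (fun i => c i * (x (min (t i) r) - x (min (s i) r))) l (𝓝 z)) :
    ∀ᶠ i in l, s i < r ∧ c i ≠ 0 := by
  filter_upwards [hgain.eventually_ne hz] with i hi
  refine ⟨lt_of_not_ge fun hrs => hi ?_, fun hc => hi (by rw [hc, zero_mul])⟩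
  rw [min_eq_right hrs, min_eq_right (hrs.trans (hst i)), sub_self, mul_zero]

variable [TopologicalSpace α]

theorem eventually_le_of_tendsto_mul_sub {L : ℝ} (hx : Tendsto x (𝓝[<] r) (𝓝 L))
    (hst : ∀ i, s i ≤ t i) (hs : Tendsto s l (𝓝 r)) (ht : Tendsto t l (𝓝 r))
    (hc : IsBoundedUnder (· ≤ ·) l (norm ∘ c)) (hz : z ≠ 0)
    (hgain : Tendsto (fun i => c i * (x (min (t i) r) - x (min (s i) r))) l (𝓝 z)) :
    ∀ᶠ i in l, r ≤ t i := by
  by_contra hfreq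
  simp only [not_eventually, not_le] at hfreq
  set l' := l ⊓ 𝓟 {i | t i < r}
  have : l'.NeBot := frequently_iff_neBot.mp hfreq
  have hl' : l' ≤ l := inf_le_left
  have htr : ∀ᶠ i in l', t i < r := mem_inf_of_right (mem_principal_self _)
  have hsr : ∀ᶠ i in l', s i < r := htr.mono fun i hi => (hst i).trans_lt hi
  have hs' : Tendsto s l' (𝓝[<] r) :=
    tendsto_nhdsWithin_of_tendsto_nhds_of_eventually_within _ (hs.mono_left hl') hsr
  have ht' : Tendsto t l' (𝓝[<] r) :=
    tendsto_nhdsWithin_of_tendsto_nhds_of_eventually_within _ (ht.mono_left hl') htr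
  have hdiff : Tendsto (fun i => x (t i) - x (s i)) l' (𝓝 0) := by
    simpa using (hx.comp ht').sub (hx.comp hs')
  have hzero : Tendsto (fun i => c i * (x (min (t i) r) - x (min (s i) r))) l' (𝓝 0) := by
    refine (isBoundedUnder_le_mul_tendsto_zero (hc.mono hl') hdiff).congr' ?_
    filter_upwards [htr, hsr] with i hti hsi
    rw [min_eq_left hti.le, min_eq_left hsi.le]
  exact hz (tendsto_nhds_unique (hgain.mono_left hl') hzero)

theorem eventually_lt_le_and_ne_zero_of_tendsto_mul_sub {L : ℝ}
    (hx : Tendsto x (𝓝[<] r) (𝓝 L)) (hst : ∀ i, s i ≤ t i) (hs : Tendsto s l (𝓝 r)) (ht : Tendsto t l (𝓝 r))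
    (hc : IsBoundedUnder (· ≤ ·) l (norm ∘ c)) (hz : z ≠ 0)
    (hgain : Tendsto (fun i => c i * (x (min (t i) r) - x (min (s i) r))) l (𝓝 z)) :
    ∀ᶠ i in l, s i < r ∧ r ≤ t i ∧ c i ≠ 0 := by
  filter_upwards [eventually_lt_and_ne_zero_of_tendsto_mul_sub hst hz hgain,
    eventually_le_of_tendsto_mul_sub hx hst hs ht hc hz hgain] with i hsc ht
  exact ⟨hsc.1, ht, hsc.2⟩

end Pathwise

theorem tendsto_nhdsLT_of_pos_imp {x : ℝ≥0 → ℝ} {r : ℝ≥0} {L : ℝ}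
    (hx : 0 < r → Tendsto x (𝓝[<] r) (𝓝 L)) : Tendsto x (𝓝[<] r) (𝓝 L) := by
  rcases eq_zero_or_pos r with rfl | hr
  · simp
  · exact hx hr

theorem stmt4_general
    {Ω : Type*} {m : MeasurableSpace Ω} {P : Measure Ω}
    (X Xm : ℝ≥0 → Ω → ℝ)
    -- càdlàg paths: right-continuity and existence of (finite) left limits `Xm`
    (hll : ∀ ω, ∀ t : ℝ≥0, 0 < t → Tendsto (fun s => X s ω) (𝓝[<] t) (𝓝 (Xm t ω)))
    (τ : Ω → ℝ≥0∞)
    (σ τ' : ℕ → Ω → ℝ≥0)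
    (hle : ∀ n, ∀ ω, σ n ω ≤ τ' n ω)
    (hσlim : ∀ᵐ ω ∂P, Tendsto (fun n => (σ n ω : ℝ≥0∞)) atTop (𝓝 (τ ω)))
    (hτ'lim : ∀ᵐ ω ∂P, Tendsto (fun n => (τ' n ω : ℝ≥0∞)) atTop (𝓝 (τ ω)))
    (ξ : ℕ → Ω → ℝ)
    (M : ℝ) (hξbdd : ∀ᵐ ω ∂P, ∀ n, |ξ n ω| ≤ M)
    (ζ : Ω → ℝ) (hζpos : ∀ᵐ ω ∂P, τ ω < ∞ → 0 < ζ ω)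
    (hgains : ∀ᵐ ω ∂P, ∀ t : ℝ≥0,
      Tendsto (fun n =>
          ξ n ω * (X (min (τ' n ω) t) ω - X (min (σ n ω) t) ω)) atTop
        (𝓝 (if τ ω ≤ (t : ℝ≥0∞) then ζ ω else 0)))
    (A : ℕ → Set Ω)
    (hA : ∀ n, A n =
      {ω | (σ n ω : ℝ≥0∞) < τ ω ∧ τ ω ≤ (τ' n ω : ℝ≥0∞)} ∩ {ω | ξ n ω ≠ 0}) :
    (∀ᵐ ω ∂P, Tendsto (fun n => (A n).indicator (fun _ => (1 : ℝ)) ω) atTop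
      (𝓝 ({ω | τ ω < ∞}.indicator (fun _ => (1 : ℝ)) ω))) ∧
    (∀ᵐ ω ∂P, (τ ω < ∞ → ∀ᶠ n in atTop,
        (σ n ω : ℝ≥0∞) < τ ω ∧ τ ω ≤ (τ' n ω : ℝ≥0∞) ∧ ξ n ω ≠ 0) ∧
      (τ ω = ∞ → ∀ n, ω ∉ A n)) := by
  have hnotA : ∀ ω, τ ω = ∞ → ∀ n, ω ∉ A n := fun ω hinf n hmem => by
    rw [hA n] at hmem
    exact ENNReal.coe_ne_top (top_le_iff.mp (hinf ▸ hmem.1.2))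
  have hfin : ∀ᵐ ω ∂P, τ ω < ∞ → ∀ᶠ n in atTop,
      (σ n ω : ℝ≥0∞) < τ ω ∧ τ ω ≤ (τ' n ω : ℝ≥0∞) ∧ ξ n ω ≠ 0 := by
    filter_upwards [hσlim, hτ'lim, hξbdd, hζpos, hgains] with ω hσω hτω hξω hζω hgω hτfin
    obtain ⟨r, hr⟩ : ∃ r : ℝ≥0, (r : ℝ≥0∞) = τ ω := ⟨_, ENNReal.coe_toNNReal hτfin.ne⟩
    have hgain := hgω r
    simp only [← hr, le_refl, ite_true] at hgain
    rw [← hr] at hσω hτω hζω ⊢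
    simpa only [ENNReal.coe_lt_coe, ENNReal.coe_le_coe] using
      eventually_lt_le_and_ne_zero_of_tendsto_mul_sub (tendsto_nhdsLT_of_pos_imp (hll ω r))
        (hle · ω) (ENNReal.tendsto_coe.mp hσω) (ENNReal.tendsto_coe.mp hτω)
        (isBoundedUnder_of ⟨M, hξω⟩) (hζω ENNReal.coe_lt_top).ne' hgain
  refine ⟨?_, hfin.mono fun ω hω => ⟨hω, hnotA ω⟩⟩
  filter_upwards [hfin] with ω hω
  rw [tendsto_indicator_const_apply_iff_eventually]
  rcases eq_top_or_lt_top (τ ω) with hτω | hτω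
  · exact Eventually.of_forall fun n => by simp [hnotA ω hτω n, hτω]
  · filter_upwards [hω hτω] with n hn
    simpa [hA n, hτω, and_assoc] using hn

/-- For a flash strategy generating a sure profit at `τ`, the
events `Aₙ := {σₙ < τ ≤ τₙ} ∩ {ξₙ ≠ 0}` satisfy `1_{Aₙ} → 1_{τ<∞}` a.s.; that is,
a.s. on `{τ < ∞}` one has `σₙ < τ ≤ τₙ` and `ξₙ ≠ 0` for all sufficiently large
`n`, while a.s. on `{τ = ∞}` the event `Aₙ` fails for every `n`. -/
theorem stmt4
    {Ω : Type*} {m : MeasurableSpace Ω} {P : Measure Ω} [IsProbabilityMeasure P]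
    (F : Filtration ℝ≥0 m)
    (X Xm : ℝ≥0 → Ω → ℝ)
    (hadapted : Adapted F X)
    -- càdlàg paths: right-continuity and existence of (finite) left limits `Xm`
    (hrc : ∀ ω, ∀ t : ℝ≥0, Tendsto (fun s => X s ω) (𝓝[>] t) (𝓝 (X t ω)))
    (hll : ∀ ω, ∀ t : ℝ≥0, 0 < t → Tendsto (fun s => X s ω) (𝓝[<] t) (𝓝 (Xm t ω)))
    (τ : Ω → ℝ≥0∞) (hτ : Measurable τ) (hτfin : 0 < P {ω | τ ω < ∞})
    (σ τ' : ℕ → Ω → ℝ≥0)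
    (hσ : ∀ n, IsStoppingTime F (fun ω => (σ n ω : WithTop ℝ≥0)))
    (hτ' : ∀ n, IsStoppingTime F (fun ω => (τ' n ω : WithTop ℝ≥0)))
    (hσbdd : ∀ n, ∃ C : ℝ≥0, ∀ ω, σ n ω ≤ C)
    (hτ'bdd : ∀ n, ∃ C : ℝ≥0, ∀ ω, τ' n ω ≤ C)
    (hle : ∀ n, ∀ ω, σ n ω ≤ τ' n ω)
    (hσlim : ∀ᵐ ω ∂P, Tendsto (fun n => (σ n ω : ℝ≥0∞)) atTop (𝓝 (τ ω)))
    (hτ'lim : ∀ᵐ ω ∂P, Tendsto (fun n => (τ' n ω : ℝ≥0∞)) atTop (𝓝 (τ ω)))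
    (ξ : ℕ → Ω → ℝ) (hξmeas : ∀ n, Measurable[(hσ n).measurableSpace] (ξ n))
    (M : ℝ) (hξbdd : ∀ᵐ ω ∂P, ∀ n, |ξ n ω| ≤ M)
    (ξ' : Ω → ℝ) (hξlim : ∀ᵐ ω ∂P, Tendsto (fun n => ξ n ω) atTop (𝓝 (ξ' ω)))
    (ζ : Ω → ℝ) (hζpos : ∀ᵐ ω ∂P, τ ω < ∞ → 0 < ζ ω)
    (hgains : ∀ᵐ ω ∂P, ∀ t : ℝ≥0,
      Tendsto (fun n =>
          ξ n ω * (X (min (τ' n ω) t) ω - X (min (σ n ω) t) ω)) atTop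
        (𝓝 (if τ ω ≤ (t : ℝ≥0∞) then ζ ω else 0)))
    (A : ℕ → Set Ω)
    (hA : ∀ n, A n =
      {ω | (σ n ω : ℝ≥0∞) < τ ω ∧ τ ω ≤ (τ' n ω : ℝ≥0∞)} ∩ {ω | ξ n ω ≠ 0}) :
    (∀ᵐ ω ∂P, Tendsto (fun n => (A n).indicator (fun _ => (1 : ℝ)) ω) atTop
      (𝓝 ({ω | τ ω < ∞}.indicator (fun _ => (1 : ℝ)) ω))) ∧
    (∀ᵐ ω ∂P, (τ ω < ∞ → ∀ᶠ n in atTop,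
        (σ n ω : ℝ≥0∞) < τ ω ∧ τ ω ≤ (τ' n ω : ℝ≥0∞) ∧ ξ n ω ≠ 0) ∧
      (τ ω = ∞ → ∀ n, ω ∉ A n)) :=
  stmt4_general (m := m) X Xm hll τ σ τ' hle hσlim hτ'lim ξ M hξbdd ζ hζpos hgains A hA
end

section
/- Let X be an adapted real-valued process whose paths are làdlàg (finite left and right limits at every point), and write X_{t+}(ω) := lim_{u↓t} X_u(ω). Let τ : Ω → [0,∞] be measurable with P(τ < ∞) > 0, let σ_n ≤ τ_n be bounded stopping times with σ_n → τ and τ_n → τ a.s., and let ξ_n be 𝓕_{σ_n}-measurable random variables with sup_n |ξ_n| ≤ M a.s. for a constant M and ξ_n → ξ a.s. Assume that almost surely, for every t ≥ 0, ξ_n·(X_{τ_n∧t} − X_{σ_n∧t}) → 1_{τ<t} as n → ∞. Then, almost surely on {τ < ∞}, X_{τ+} ≠ X_τ; in particular X cannot have right-continuous paths. -/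
/-!
Fix a path with `τ = T < ∞`. The gains at the horizons `T` and `T + 1` tend to `0` and `1`, and
for large `n` their difference is `ξₙ` times the increments of `X` over `[σₙ ∨ T, τ'ₙ ∨ T]`, both
endpoints of which tend to `T` from the right. If `X` were right-continuous at `T`, that difference
would tend to `0` because `ξ` is bounded.
-/

open MeasureTheory Filter Set
open scoped NNReal ENNReal Topology

section RightContinuous

variable {ι α E : Type*} {l : Filter ι}
  [TopologicalSpace α] [LinearOrder α] [OrderClosedTopology α]

theorem tendsto_sub_comp_min_of_continuousWithinAt_Ici [AddGroup E] [TopologicalSpace E]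
    [IsTopologicalAddGroup E] {f : α → E} {T : α} (hf : ContinuousWithinAt f (Ici T) T)
    {c : ι → α} (hc : Tendsto c l (𝓝 T)) :
    Tendsto (fun n => f (c n) - f (min (c n) T)) l (𝓝 0) := by
  have hmax : Tendsto (fun n => max (c n) T) l (𝓝[Ici T] T) :=
    tendsto_nhdsWithin_iff.mpr
      ⟨by simpa using hc.max (tendsto_const_nhds (x := T)), Eventually.of_forall fun n => le_max_right _ _⟩
  have key : ∀ n, f (c n) - f (min (c n) T) = f (max (c n) T) - f T := by
    intro n
    rcases le_total (c n) T with h | h <;> simp [h]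
  simpa [key] using (hf.tendsto.comp hmax).sub_const (f T)

theorem tendsto_stopped_gains_sub_of_continuousWithinAt_Ici {f : α → ℝ} {T u : α}
    (hf : ContinuousWithinAt f (Ici T) T) (hTu : T < u) {a b : ι → α}
    (ha : Tendsto a l (𝓝 T)) (hb : Tendsto b l (𝓝 T)) {ξ : ι → ℝ} {M : ℝ}
    (hξ : ∀ n, |ξ n| ≤ M) :
    Tendsto (fun n => ξ n * (f (min (b n) u) - f (min (a n) u))
      - ξ n * (f (min (b n) T) - f (min (a n) T))) l (𝓝 0) := by
  have hincr : Tendsto (fun n => (f (b n) - f (min (b n) T)) - (f (a n) - f (min (a n) T)))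
      l (𝓝 0) := by
    simpa using (tendsto_sub_comp_min_of_continuousWithinAt_Ici hf hb).sub
      (tendsto_sub_comp_min_of_continuousWithinAt_Ici hf ha)
  have hbdd : IsBoundedUnder (· ≤ ·) l (norm ∘ ξ) := ⟨M, eventually_map.mpr (.of_forall hξ)⟩
  refine (isBoundedUnder_le_mul_tendsto_zero hbdd hincr).congr' ?_
  filter_upwards [ha.eventually_lt_const hTu, hb.eventually_lt_const hTu] with n han hbn
  rw [min_eq_left han.le, min_eq_left hbn.le]
  ring

end RightContinuous

theorem stmt6_general
    {Ω : Type*} {m : MeasurableSpace Ω} {P : Measure Ω}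
    (X Xp : ℝ≥0 → Ω → ℝ)
    -- làdlàg paths: existence of finite right limits `Xp` and of finite left limits
    (hrl : ∀ ω, ∀ t : ℝ≥0, Tendsto (fun s => X s ω) (𝓝[>] t) (𝓝 (Xp t ω)))
    (τ : Ω → ℝ≥0∞) (hτfin : 0 < P {ω | τ ω < ∞})
    (σ τ' : ℕ → Ω → ℝ≥0)
    (hσlim : ∀ᵐ ω ∂P, Tendsto (fun n => (σ n ω : ℝ≥0∞)) atTop (𝓝 (τ ω)))
    (hτ'lim : ∀ᵐ ω ∂P, Tendsto (fun n => (τ' n ω : ℝ≥0∞)) atTop (𝓝 (τ ω)))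
    (ξ : ℕ → Ω → ℝ)
    (M : ℝ) (hξbdd : ∀ᵐ ω ∂P, ∀ n, |ξ n ω| ≤ M)
    (hgains : ∀ᵐ ω ∂P, ∀ t : ℝ≥0,
      Tendsto (fun n =>
          ξ n ω * (X (min (τ' n ω) t) ω - X (min (σ n ω) t) ω)) atTop
        (𝓝 (if τ ω < (t : ℝ≥0∞) then (1 : ℝ) else 0))) :
    (∀ᵐ ω ∂P, τ ω < ∞ → Xp (τ ω).toNNReal ω ≠ X (τ ω).toNNReal ω) ∧
    ¬ (∀ ω, ∀ t : ℝ≥0, Tendsto (fun s => X s ω) (𝓝[>] t) (𝓝 (X t ω))) := by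
  have jump : ∀ᵐ ω ∂P, τ ω < ∞ → Xp (τ ω).toNNReal ω ≠ X (τ ω).toNNReal ω := by
    filter_upwards [hσlim, hτ'lim, hξbdd, hgains] with ω hσω hτ'ω hξω hgω hfin hXp
    set T : ℝ≥0 := (τ ω).toNNReal
    have hτω : τ ω = T := (ENNReal.coe_toNNReal hfin.ne).symm
    rw [hτω, ENNReal.tendsto_coe] at hσω hτ'ω
    have hcont : ContinuousWithinAt (fun s => X s ω) (Ici T) T :=
      continuousWithinAt_Ioi_iff_Ici.mp (by simpa [ContinuousWithinAt, hXp] using hrl ω T)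
    have h1 := hgω (T + 1)
    have h0 := hgω T
    rw [hτω, if_pos (mod_cast lt_add_one T)] at h1
    rw [hτω, if_neg (lt_irrefl _)] at h0
    have hdiff := tendsto_stopped_gains_sub_of_continuousWithinAt_Ici hcont (lt_add_one T)
      hσω hτ'ω hξω
    exact one_ne_zero (tendsto_nhds_unique (by simpa using h1.sub h0) hdiff)
  refine ⟨jump, fun hrc => hτfin.ne' ?_⟩
  rw [← compl_compl {ω | τ ω < ∞}, ← mem_ae_iff]
  filter_upwards [jump] with ω hω hfin
  exact hω hfin (tendsto_nhds_unique (hrl ω _) (hrc ω _))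

/-- If a flash strategy has gains converging a.s. to `1_{τ<t}`
for all `t` (with `P(τ<∞) > 0`), then a.s. on `{τ<∞}` the làdlàg process `X`
jumps from the right at `τ`, i.e. `X_{τ+} ≠ X_τ`; in particular `X` cannot have
right-continuous paths. -/
theorem stmt6
    {Ω : Type*} {m : MeasurableSpace Ω} {P : Measure Ω} [IsProbabilityMeasure P]
    (F : Filtration ℝ≥0 m)
    (X Xp : ℝ≥0 → Ω → ℝ)
    (hadapted : Adapted F X)
    -- làdlàg paths: existence of finite right limits `Xp` and of finite left limits
    (hrl : ∀ ω, ∀ t : ℝ≥0, Tendsto (fun s => X s ω) (𝓝[>] t) (𝓝 (Xp t ω)))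
    (hll : ∀ ω, ∀ t : ℝ≥0, 0 < t →
      ∃ l : ℝ, Tendsto (fun s => X s ω) (𝓝[<] t) (𝓝 l))
    (τ : Ω → ℝ≥0∞) (hτ : Measurable τ) (hτfin : 0 < P {ω | τ ω < ∞})
    (σ τ' : ℕ → Ω → ℝ≥0)
    (hσ : ∀ n, IsStoppingTime F (fun ω => ((σ n ω : ℝ≥0) : WithTop ℝ≥0))) (hτ' : ∀ n, IsStoppingTime F (fun ω => ((τ' n ω : ℝ≥0) : WithTop ℝ≥0)))
    (hσbdd : ∀ n, ∃ C : ℝ≥0, ∀ ω, σ n ω ≤ C)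
    (hτ'bdd : ∀ n, ∃ C : ℝ≥0, ∀ ω, τ' n ω ≤ C)
    (hle : ∀ n, ∀ ω, σ n ω ≤ τ' n ω)
    (hσlim : ∀ᵐ ω ∂P, Tendsto (fun n => (σ n ω : ℝ≥0∞)) atTop (𝓝 (τ ω)))
    (hτ'lim : ∀ᵐ ω ∂P, Tendsto (fun n => (τ' n ω : ℝ≥0∞)) atTop (𝓝 (τ ω)))
    (ξ : ℕ → Ω → ℝ) (hξmeas : ∀ n, Measurable[(hσ n).measurableSpace] (ξ n))
    (M : ℝ) (hξbdd : ∀ᵐ ω ∂P, ∀ n, |ξ n ω| ≤ M)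
    (ξ' : Ω → ℝ) (hξlim : ∀ᵐ ω ∂P, Tendsto (fun n => ξ n ω) atTop (𝓝 (ξ' ω)))
    (hgains : ∀ᵐ ω ∂P, ∀ t : ℝ≥0,
      Tendsto (fun n =>
          ξ n ω * (X (min (τ' n ω) t) ω - X (min (σ n ω) t) ω)) atTop
        (𝓝 (if τ ω < (t : ℝ≥0∞) then (1 : ℝ) else 0))) :
    (∀ᵐ ω ∂P, τ ω < ∞ → Xp (τ ω).toNNReal ω ≠ X (τ ω).toNNReal ω) ∧
    ¬ (∀ ω, ∀ t : ℝ≥0, Tendsto (fun s => X s ω) (𝓝[>] t) (𝓝 (X t ω))) :=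
  stmt6_general (m := m) X Xp hrl τ hτfin σ τ' hσlim hτ'lim ξ M hξbdd hgains
end

section
/- Let ε > 0 and k > 0 be real numbers, let x, y, x̃, ỹ be strictly positive reals satisfying 1/(1+ε) ≤ x̃/x ≤ 1+ε and 1/(1+ε) ≤ ỹ/y ≤ 1+ε, and let c be a real number with |c| ≤ k. Then c·(ỹ − x̃) ≥ 1_{c≥0}·c·(y − x)/(1+ε) + 1_{c<0}·(1+ε)·c·(y − x) − |c|·ε·(2+ε)/(1+ε)·x; in particular c·(ỹ − x̃) ≥ 1_{c≥0}·c·(y − x)/(1+ε) + 1_{c<0}·(1+ε)·c·(y − x) − 2εk·x. -/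
/-! Multiplying out the price bands gives `y/(1+ε) ≤ ỹ ≤ (1+ε) y` and `x/(1+ε) ≤ x̃ ≤ (1+ε) x`.
A long position is hurt most by the low exit and high entry price, a short one by the
opposite pair, and since `(1+ε)² - 1 = ε(2+ε)` the resulting worst case splits into the
scaled gain `c(y-x)` and the cost term `|c| ε(2+ε)/(1+ε) x`. That cost is at most
`2εkx` because `(2+ε)/(1+ε) ≤ 2`. -/

lemma div_le_of_one_div_le_div {a x xt : ℝ} (hx : 0 < x) (h : 1 / a ≤ xt / x) : x / a ≤ xt := by
  rw [le_div_iff₀ hx, one_div_mul_eq_div] at h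
  exact h

lemma le_mul_of_div_le {a x xt : ℝ} (hx : 0 < x) (h : xt / x ≤ a) : xt ≤ a * x :=
  (div_le_iff₀ hx).mp h

lemma long_gain_ge {ε c x y xt yt : ℝ} (hε : 0 < 1 + ε) (hc : 0 ≤ c)
    (hy : y / (1 + ε) ≤ yt) (hx : xt ≤ (1 + ε) * x) :
    c * (y - x) / (1 + ε) - c * ε * (2 + ε) / (1 + ε) * x ≤ c * (yt - xt) := by
  have hsplit : c * (y - x) / (1 + ε) - c * ε * (2 + ε) / (1 + ε) * x
      = c * (y / (1 + ε) - (1 + ε) * x) := by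
    field_simp
    ring
  rw [hsplit]
  exact mul_le_mul_of_nonneg_left (by linarith) hc

lemma short_gain_ge {ε c x y xt yt : ℝ} (hε : 0 < 1 + ε) (hc : c ≤ 0)
    (hy : yt ≤ (1 + ε) * y) (hx : x / (1 + ε) ≤ xt) :
    (1 + ε) * (c * (y - x)) - -c * ε * (2 + ε) / (1 + ε) * x ≤ c * (yt - xt) := by
  have hsplit : (1 + ε) * (c * (y - x)) - -c * ε * (2 + ε) / (1 + ε) * x
      = c * ((1 + ε) * y - x / (1 + ε)) := by
    field_simp
    ring
  rw [hsplit]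
  exact mul_le_mul_of_nonpos_left (by linarith) hc

lemma two_add_div_one_add_le_two {ε : ℝ} (hε : 0 ≤ ε) : (2 + ε) / (1 + ε) ≤ 2 := by
  rw [div_le_iff₀ (by linarith)]
  linarith

lemma cost_le_two_mul {ε k c x : ℝ} (hε : 0 ≤ ε) (hx : 0 ≤ x) (hc : |c| ≤ k) :
    |c| * ε * (2 + ε) / (1 + ε) * x ≤ 2 * ε * k * x := by
  calc |c| * ε * (2 + ε) / (1 + ε) * x = (|c| * ε * x) * ((2 + ε) / (1 + ε)) := by ring
    _ ≤ (k * ε * x) * 2 := by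
        have hk : 0 ≤ k := (abs_nonneg c).trans hc
        exact mul_le_mul (by gcongr) (two_add_div_one_add_le_two hε) (by positivity)
          (by positivity)
    _ = 2 * ε * k * x := by ring

theorem stmt9_general
    (ε k x y xt yt c : ℝ)
    (hε : 0 < ε)
    (hx : 0 < x) (hy : 0 < y)
    (hx1 : 1 / (1 + ε) ≤ xt / x) (hx2 : xt / x ≤ 1 + ε)
    (hy1 : 1 / (1 + ε) ≤ yt / y) (hy2 : yt / y ≤ 1 + ε)
    (hc : |c| ≤ k) :
    (c * (yt - xt) ≥
      (if 0 ≤ c then c * (y - x) / (1 + ε) else 0)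
        + (if c < 0 then (1 + ε) * (c * (y - x)) else 0)
        - |c| * ε * (2 + ε) / (1 + ε) * x) ∧
    (c * (yt - xt) ≥
      (if 0 ≤ c then c * (y - x) / (1 + ε) else 0)
        + (if c < 0 then (1 + ε) * (c * (y - x)) else 0)
        - 2 * ε * k * x) := by
  have h1 : 0 < 1 + ε := by linarith
  have key : c * (yt - xt) ≥
      (if 0 ≤ c then c * (y - x) / (1 + ε) else 0)
        + (if c < 0 then (1 + ε) * (c * (y - x)) else 0)
        - |c| * ε * (2 + ε) / (1 + ε) * x := by
    rcases le_or_gt 0 c with hc0 | hc0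
    · simpa [hc0, not_lt.mpr hc0, abs_of_nonneg hc0] using
        long_gain_ge h1 hc0 (div_le_of_one_div_le_div hy hy1) (le_mul_of_div_le hx hx2)
    · simpa [hc0, not_le.mpr hc0, abs_of_neg hc0] using
        short_gain_ge h1 hc0.le (le_mul_of_div_le hy hy2) (div_le_of_one_div_le_div hx hx1)
  exact ⟨key, le_trans (sub_le_sub_left (cost_le_two_mul hε.le hx.le hc) _) key⟩

/-- Pointwise inequality comparing the gains of a buy-and-hold
position `c` under prices `(x, y)` and under `ε`-perturbed prices `(x̃, ỹ)`:
`c·(ỹ − x̃) ≥ 1_{c≥0}·c·(y − x)/(1+ε) + 1_{c<0}·(1+ε)·c·(y − x) − |c|·ε·(2+ε)/(1+ε)·x`,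
and in particular the same lower bound with `−2εk·x` in place of the last term,
where `|c| ≤ k`. -/
theorem stmt9
    (ε k x y xt yt c : ℝ)
    (hε : 0 < ε) (hk : 0 < k)
    (hx : 0 < x) (hy : 0 < y) (hxt : 0 < xt) (hyt : 0 < yt)
    (hx1 : 1 / (1 + ε) ≤ xt / x) (hx2 : xt / x ≤ 1 + ε)
    (hy1 : 1 / (1 + ε) ≤ yt / y) (hy2 : yt / y ≤ 1 + ε)
    (hc : |c| ≤ k) :
    (c * (yt - xt) ≥
      (if 0 ≤ c then c * (y - x) / (1 + ε) else 0)
        + (if c < 0 then (1 + ε) * (c * (y - x)) else 0)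
        - |c| * ε * (2 + ε) / (1 + ε) * x) ∧
    (c * (yt - xt) ≥
      (if 0 ≤ c then c * (y - x) / (1 + ε) else 0)
        + (if c < 0 then (1 + ε) * (c * (y - x)) else 0)
        - 2 * ε * k * x) :=
  stmt9_general ε k x y xt yt c hε hx hy hx1 hx2 hy1 hy2 hc
end

section
/- Let f : [0,∞) → ℝ, let t > 0, and suppose f has a finite left limit f(t−) at t, i.e. f(s) → f(t−) as s → t with s < t. Let M ≥ 0, let (a_n), (b_n) be sequences in [0,∞) and (c_n) real numbers with |c_n| ≤ M for all n. For s ≥ 0 define g_n(s) := c_n·(f(min(b_n,s)) − f(min(a_n,s))), and define L_n := c_n·((f(t−)·1_{b_n≥t} + f(b_n)·1_{b_n<t}) − (f(t−)·1_{a_n≥t} + f(a_n)·1_{a_n<t})), which is the left limit of g_n at t. Then sup_n |g_n(u) − L_n| → 0 as u → t with u < t; that is, the left limits of the gains functions g_n at t are attained uniformly in n. -/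
open Filter Set
open scoped NNReal Topology

/-!
Stopping `f` at `u`, the path `x ↦ f (min x u)` converges as `u ↑ t` to `f x` for `x < t` and to
the left limit `l` for `x ≥ t`, uniformly in `x`: the error is either `0` or a distance between two
values of `f` on `[u, t)`, each close to `l`. The gains `gₙ` combine two such stopped paths, at `aₙ`
and `bₙ`, with coefficients bounded by `M`, so their convergence stays uniform in `n`.
-/

section LeftLimit

variable {α β : Type*} [LinearOrder α] [TopologicalSpace α] [OrderTopology α]

lemma eventually_Ioo_subset_of_mem_nhdsLT {t : α} {s : Set α} (hs : s ∈ 𝓝[<] t) :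
    ∀ᶠ u in 𝓝[<] t, Ioo u t ⊆ s := by
  rcases isBot_or_exists_lt t with ht | ⟨b, hb⟩
  · filter_upwards [self_mem_nhdsWithin] with u hu using absurd (ht u) (not_le.2 hu)
  · obtain ⟨u₀, hu₀, hsub⟩ := (mem_nhdsLT_iff_exists_Ioo_subset' hb).1 hs
    filter_upwards [Ioo_mem_nhdsLT hu₀] with u hu using (Ioo_subset_Ioo_left hu.1.le).trans hsub

variable [PseudoMetricSpace β]

lemma tendstoUniformly_comp_min_nhdsLT {f : α → β} {t : α} {l : β}
    (hl : Tendsto f (𝓝[<] t) (𝓝 l)) :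
    TendstoUniformly (fun u x => f (min x u)) (fun x => if t ≤ x then l else f x) (𝓝[<] t) := by
  rw [Metric.tendstoUniformly_iff]
  intro ε hε
  have hnear : {s | dist (f s) l < ε / 2} ∈ 𝓝[<] t := hl (Metric.ball_mem_nhds l (half_pos hε))
  filter_upwards [self_mem_nhdsWithin, hnear, eventually_Ioo_subset_of_mem_nhdsLT hnear]
    with u (hut : u < t) (hu : dist (f u) l < ε / 2) hIoo x
  by_cases htx : t ≤ x
  · rw [if_pos htx, min_eq_right (hut.trans_le htx).le, dist_comm]
    linarith
  · rw [if_neg htx]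
    rcases le_or_gt x u with hxu | hux
    · simpa [min_eq_left hxu] using hε
    · rw [min_eq_right hux.le]
      have hx : dist (f x) l < ε / 2 := hIoo ⟨hux, not_le.1 htx⟩
      calc dist (f x) (f u) ≤ dist (f x) l + dist (f u) l := dist_triangle_right _ _ _
        _ < ε := by linarith

end LeftLimit

section UniformlyBounded

variable {ι γ : Type*} {p : Filter γ} {F : γ → ι → ℝ} {φ : ι → ℝ}

lemma TendstoUniformly.mul_left_of_abs_le (h : TendstoUniformly F φ p) {c : ι → ℝ} {M : ℝ}
    (hM : 0 ≤ M) (hc : ∀ i, |c i| ≤ M) :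
    TendstoUniformly (fun u i => c i * F u i) (fun i => c i * φ i) p := by
  rw [Metric.tendstoUniformly_iff] at h ⊢
  intro ε hε
  have hM₁ : 0 < M + 1 := by linarith
  filter_upwards [h (ε / (M + 1)) (div_pos hε hM₁)] with u hu i
  rw [Real.dist_eq, ← mul_sub, abs_mul, ← Real.dist_eq]
  calc |c i| * dist (φ i) (F u i) ≤ M * (ε / (M + 1)) :=
        mul_le_mul (hc i) (hu i).le dist_nonneg hM
    _ < ε := by
        rw [mul_div_assoc', div_lt_iff₀ hM₁]
        nlinarith

lemma TendstoUniformly.tendsto_iSup_abs_sub (h : TendstoUniformly F φ p) :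
    Tendsto (fun u => ⨆ i, |F u i - φ i|) p (𝓝 0) := by
  rw [Metric.tendsto_nhds]
  intro ε hε
  filter_upwards [Metric.tendstoUniformly_iff.1 h (ε / 2) (half_pos hε)] with u hu
  have hle : ⨆ i, |F u i - φ i| ≤ ε / 2 :=
    Real.iSup_le (fun i => by rw [abs_sub_comm, ← Real.dist_eq]; exact (hu i).le) (by positivity)
  rw [Real.dist_eq, sub_zero, abs_of_nonneg (Real.iSup_nonneg fun i => abs_nonneg _)]
  linarith

end UniformlyBounded

theorem stmt12_general
    (f : ℝ≥0 → ℝ) (t : ℝ≥0) (l : ℝ)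
    (hl : Tendsto f (𝓝[<] t) (𝓝 l))
    (M : ℝ) (hM : 0 ≤ M)
    (a b : ℕ → ℝ≥0) (c : ℕ → ℝ) (hc : ∀ n, |c n| ≤ M)
    (g : ℕ → ℝ≥0 → ℝ)
    (hg : ∀ n, ∀ s : ℝ≥0, g n s = c n * (f (min (b n) s) - f (min (a n) s)))
    (L : ℕ → ℝ)
    (hL : ∀ n, L n = c n * (((if t ≤ b n then l else f (b n)))
      - ((if t ≤ a n then l else f (a n))))) :
    (∀ n, Tendsto (g n) (𝓝[<] t) (𝓝 (L n))) ∧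
    Tendsto (fun u => ⨆ n, |g n u - L n|) (𝓝[<] t) (𝓝 (0 : ℝ)) := by
  have hstop := tendstoUniformly_comp_min_nhdsLT hl
  have hgains : TendstoUniformly (fun u n => g n u) L (𝓝[<] t) := by
    convert ((hstop.comp b).sub (hstop.comp a)).mul_left_of_abs_le hM hc using 1
    · ext u n
      simp only [hg, Function.comp_apply, Pi.sub_apply]
    · ext n
      simp only [hL, Function.comp_apply, Pi.sub_apply]
  exact ⟨fun n => hgains.tendsto_at n, hgains.tendsto_iSup_abs_sub⟩

/-- Uniform attainment of left limits of buy-and-hold gains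
functions: if `f` has left limit `l` at `t > 0`, `|cₙ| ≤ M`, and
`gₙ(s) = cₙ·(f(bₙ∧s) − f(aₙ∧s))`, then each `gₙ` has left limit
`Lₙ = cₙ·((l·1_{bₙ≥t} + f(bₙ)·1_{bₙ<t}) − (l·1_{aₙ≥t} + f(aₙ)·1_{aₙ<t}))`
at `t`, and `supₙ |gₙ(u) − Lₙ| → 0` as `u ↑ t`. -/
theorem stmt12
    (f : ℝ≥0 → ℝ) (t : ℝ≥0) (ht : 0 < t) (l : ℝ)
    (hl : Tendsto f (𝓝[<] t) (𝓝 l))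
    (M : ℝ) (hM : 0 ≤ M)
    (a b : ℕ → ℝ≥0) (c : ℕ → ℝ) (hc : ∀ n, |c n| ≤ M)
    (g : ℕ → ℝ≥0 → ℝ)
    (hg : ∀ n, ∀ s : ℝ≥0, g n s = c n * (f (min (b n) s) - f (min (a n) s)))
    (L : ℕ → ℝ)
    (hL : ∀ n, L n = c n * (((if t ≤ b n then l else f (b n)))
      - ((if t ≤ a n then l else f (a n))))) :
    (∀ n, Tendsto (g n) (𝓝[<] t) (𝓝 (L n))) ∧
    Tendsto (fun u => ⨆ n, |g n u - L n|) (𝓝[<] t) (𝓝 (0 : ℝ)) :=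
  stmt12_general f t l hl M hM a b c hc g hg L hL
end

section
/- Let f : [0,∞) → ℝ, let t > 0, and suppose f has a finite left limit f(t−) at t. Let M ≥ 0, let (a_n), (b_n) be sequences in [0,∞) with a_n ≤ b_n and (c_n) real numbers with |c_n| ≤ M for all n. For s ≥ 0 define g_n(s) := c_n·(f(min(b_n,s)) − f(min(a_n,s))), and suppose that for every s ∈ [0,t] the limit G(s) := lim_{n→∞} g_n(s) exists. Then the left limit G(t−) := lim_{u↑t} G(u) exists, the limit lim_{n→∞} c_n·(f(t) − f(t−))·1_{a_n < t ≤ b_n} exists, and G(t) − G(t−) = lim_{n→∞} c_n·(f(t) − f(t−))·1_{a_n < t ≤ b_n}. -/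
open Filter Set
open scoped NNReal Topology

/-! For `s < t` write `Δₛ(x) = f(x ∧ t) − f(x ∧ s)`, so that `gₙ(t) − gₙ(s) = cₙ (Δₛ(bₙ) − Δₛ(aₙ))`.
Only values of `f` on `[s, t]` enter `Δₛ`, so as `s ↑ t` it converges to `(f(t) − f(t−))·1_{t ≤ x}`
uniformly in `x`; as `|cₙ| ≤ M`, `gₙ(t) − gₙ(s)` converges to the jump term uniformly in `n`.
Together with `gₙ(t) − gₙ(s) → G(t) − G(s)` for each `s`, the Moore–Osgood interchange of limits
yields both limits and their equality. -/

theorem TendstoUniformly.exists_tendsto_of_eventually_tendsto {ι α β : Type*} [UniformSpace β]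
    [CompleteSpace β] {p : Filter ι} [p.NeBot] {q : Filter α} [q.NeBot] {F : ι → α → β}
    {f : α → β} {L : ι → β} (h : TendstoUniformly F f p)
    (hF : ∀ᶠ i in p, Tendsto (F i) q (𝓝 (L i))) :
    ∃ ℓ, Tendsto f q (𝓝 ℓ) ∧ Tendsto L p (𝓝 ℓ) := by
  have hcauchy : Cauchy (q.map f) := by
    refine cauchy_map_iff'.2 fun U hU => ?_
    obtain ⟨V, hV, hVU⟩ := comp3_mem_uniformity hU
    obtain ⟨i, hFi, hfF, hFf⟩ := (hF.and ((h V hV).and (h _ (symm_le_uniformity hV)))).exists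
    have hFi_cauchy : ∀ᶠ mn in q ×ˢ q, (F i mn.1, F i mn.2) ∈ V :=
      cauchy_map_iff'.1 hFi.cauchy_map hV
    exact hFi_cauchy.mono fun mn hmn => hVU ⟨F i mn.1, hfF mn.1, F i mn.2, hmn, hFf mn.2⟩
  obtain ⟨ℓ, hℓ⟩ := CompleteSpace.complete hcauchy
  refine ⟨ℓ, hℓ, Uniform.tendsto_nhds_left.2 fun U hU => ?_⟩
  obtain ⟨V, hV, hVU⟩ := comp3_mem_uniformity hU
  show ∀ᶠ i in p, (L i, ℓ) ∈ U
  filter_upwards [hF, h _ (symm_le_uniformity hV)] with i hFi hFf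
  have hLF : ∀ᶠ x in q, (L i, F i x) ∈ V := Uniform.tendsto_nhds_right.1 hFi hV
  have hfℓ : ∀ᶠ x in q, (f x, ℓ) ∈ V := Uniform.tendsto_nhds_left.1 hℓ hV
  obtain ⟨x, hLF, hfℓ⟩ := (hLF.and hfℓ).exists
  exact hVU ⟨F i x, hLF, f x, hFf x, hfℓ⟩

theorem TendstoUniformly.mul_left_of_norm_le {ι α R : Type*} [SeminormedRing R] {p : Filter ι}
    {F : ι → α → R} {f : α → R} {c : α → R} {M : ℝ} (h : TendstoUniformly F f p)
    (hc : ∀ x, ‖c x‖ ≤ M) :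
    TendstoUniformly (fun i x => c x * F i x) (fun x => c x * f x) p := by
  rw [Metric.tendstoUniformly_iff] at h ⊢
  intro ε hε
  have hM : 0 < |M| + 1 := by positivity
  filter_upwards [h (ε / (|M| + 1)) (by positivity)] with i hi x
  calc dist (c x * f x) (c x * F i x) ≤ ‖c x‖ * dist (f x) (F i x) := by
        rw [dist_eq_norm, dist_eq_norm, ← mul_sub]; exact norm_mul_le _ _
    _ ≤ (|M| + 1) * dist (f x) (F i x) := by
        gcongr; exact (hc x).trans ((le_abs_self M).trans (le_add_of_nonneg_right zero_le_one))
    _ < (|M| + 1) * (ε / (|M| + 1)) := by gcongr; exact hi x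
    _ = ε := by field_simp

theorem Filter.Eventually.forall_Ico_nhdsLT {α : Type*} [LinearOrder α] [TopologicalSpace α]
    [OrderTopology α] {t : α} {P : α → Prop} (h : ∀ᶠ y in 𝓝[<] t, P y) :
    ∀ᶠ s in 𝓝[<] t, ∀ y ∈ Ico s t, P y := by
  by_cases ht : ∃ u, u < t
  · obtain ⟨u, hu, hsub⟩ := (mem_nhdsLT_iff_exists_Ioo_subset' ht.choose_spec).1 h
    filter_upwards [Ioo_mem_nhdsLT hu] with s hs y hy
    exact hsub ⟨hs.1.trans_le hy.1, hy.2⟩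
  · have hIio : Iio t = ∅ := eq_empty_of_forall_notMem fun u hu => ht ⟨u, hu⟩
    rw [hIio, nhdsWithin_empty]
    exact eventually_bot

theorem tendstoUniformly_sub_min_nhdsLT {α E : Type*} [LinearOrder α] [TopologicalSpace α]
    [OrderTopology α] [SeminormedAddCommGroup E] {f : α → E} {t : α} {l : E}
    (hl : Tendsto f (𝓝[<] t) (𝓝 l)) :
    TendstoUniformly (fun s x => f (min x t) - f (min x s))
      (fun x => if t ≤ x then f t - l else 0) (𝓝[<] t) := by
  rw [Metric.tendstoUniformly_iff]
  intro ε hε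
  have hclose : ∀ᶠ y in 𝓝[<] t, dist (f y) l < ε / 2 :=
    hl (Metric.ball_mem_nhds l (half_pos hε))
  filter_upwards [hclose.forall_Ico_nhdsLT, self_mem_nhdsWithin] with s hs (hst : s < t) x
  rcases le_or_gt t x with htx | hxt
  · rw [if_pos htx, min_eq_right htx, min_eq_right (hst.le.trans htx), dist_eq_norm,
      sub_sub_sub_cancel_left, ← dist_eq_norm]
    linarith [hs s ⟨le_rfl, hst⟩]
  · rw [if_neg hxt.not_ge, min_eq_left hxt.le]
    rcases le_or_gt x s with hxs | hsx
    · rwa [min_eq_left hxs, sub_self, dist_self]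
    · rw [min_eq_right hsx.le, dist_comm, dist_eq_norm, sub_zero, ← dist_eq_norm]
      linarith [dist_triangle_right (f x) (f s) l, hs x ⟨hsx.le, hxt⟩, hs s ⟨le_rfl, hst⟩]

theorem ite_le_sub_ite_le_eq_mul_ite {α R : Type*} [LinearOrder α] [Ring R] {a b t : α}
    (hab : a ≤ b) (v : R) :
    ((if t ≤ b then v else 0) - if t ≤ a then v else 0) =
      v * if a < t ∧ t ≤ b then 1 else 0 := by
  rcases le_or_gt t a with hta | hat
  · simp [hta, hta.trans hab, hta.not_gt]
  · rcases le_or_gt t b with htb | hbt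
    · simp [htb, hat.not_ge, hat]
    · simp [hbt.not_ge, hat.not_ge]

theorem stmt13_general
    (f : ℝ≥0 → ℝ) (t : ℝ≥0) (ht : 0 < t) (l : ℝ)
    (hl : Tendsto f (𝓝[<] t) (𝓝 l))
    (M : ℝ)
    (a b : ℕ → ℝ≥0) (hab : ∀ n, a n ≤ b n)
    (c : ℕ → ℝ) (hc : ∀ n, |c n| ≤ M)
    (g : ℕ → ℝ≥0 → ℝ)
    (hg : ∀ n, ∀ s : ℝ≥0, g n s = c n * (f (min (b n) s) - f (min (a n) s)))
    (G : ℝ≥0 → ℝ)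
    (hG : ∀ s : ℝ≥0, s ≤ t → Tendsto (fun n => g n s) atTop (𝓝 (G s))) :
    ∃ Gm J : ℝ,
      Tendsto G (𝓝[<] t) (𝓝 Gm) ∧
      Tendsto (fun n => c n * (f t - l)
        * (if a n < t ∧ t ≤ b n then (1 : ℝ) else 0)) atTop (𝓝 J) ∧
      G t - Gm = J := by
  have : (𝓝[<] t).NeBot := nhdsLT_neBot_of_exists_lt ⟨0, ht⟩
  have hincr := tendstoUniformly_sub_min_nhdsLT hl
  have hunif : TendstoUniformly (fun s n => g n t - g n s)
      (fun n => c n * (f t - l) * (if a n < t ∧ t ≤ b n then (1 : ℝ) else 0)) (𝓝[<] t) := by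
    convert ((hincr.comp b).sub (hincr.comp a)).mul_left_of_norm_le hc using 1
    · ext s n
      simp only [Function.comp_apply, Pi.sub_apply, hg]
      ring
    · ext n
      simp only [Function.comp_apply, Pi.sub_apply, ite_le_sub_ite_le_eq_mul_ite (hab n),
        mul_assoc]
  have hpointwise : ∀ᶠ s in 𝓝[<] t, Tendsto (fun n => g n t - g n s) atTop (𝓝 (G t - G s)) := by
    filter_upwards [self_mem_nhdsWithin] with s (hs : s < t)
    exact (hG t le_rfl).sub (hG s hs.le)
  obtain ⟨J, hJ, hGJ⟩ := hunif.exists_tendsto_of_eventually_tendsto hpointwise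
  refine ⟨G t - J, J, ?_, hJ, sub_sub_cancel _ _⟩
  simpa only [sub_sub_cancel] using (tendsto_const_nhds (x := G t)).sub hGJ

/-- Interchange-of-limits identity for the jump of the limiting
gains of a flash strategy (equation (2.3) of the paper): if `f` has left limit
`l` at `t > 0`, `aₙ ≤ bₙ`, `|cₙ| ≤ M`, `gₙ(s) = cₙ·(f(bₙ∧s) − f(aₙ∧s))` and
`gₙ(s) → G(s)` for every `s ∈ [0,t]`, then the left limit `G(t−)` exists,
`limₙ cₙ·(f(t) − l)·1_{aₙ<t≤bₙ}` exists, and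
`G(t) − G(t−) = limₙ cₙ·(f(t) − l)·1_{aₙ<t≤bₙ}`. -/
theorem stmt13
    (f : ℝ≥0 → ℝ) (t : ℝ≥0) (ht : 0 < t) (l : ℝ)
    (hl : Tendsto f (𝓝[<] t) (𝓝 l))
    (M : ℝ) (hM : 0 ≤ M)
    (a b : ℕ → ℝ≥0) (hab : ∀ n, a n ≤ b n)
    (c : ℕ → ℝ) (hc : ∀ n, |c n| ≤ M)
    (g : ℕ → ℝ≥0 → ℝ)
    (hg : ∀ n, ∀ s : ℝ≥0, g n s = c n * (f (min (b n) s) - f (min (a n) s)))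
    (G : ℝ≥0 → ℝ)
    (hG : ∀ s : ℝ≥0, s ≤ t → Tendsto (fun n => g n s) atTop (𝓝 (G s))) :
    ∃ Gm J : ℝ,
      Tendsto G (𝓝[<] t) (𝓝 Gm) ∧
      Tendsto (fun n => c n * (f t - l)
        * (if a n < t ∧ t ≤ b n then (1 : ℝ) else 0)) atTop (𝓝 J) ∧
      G t - Gm = J :=
  stmt13_general f t ht l hl M a b hab c hc g hg G hG
end

section
/- Let X be a càdlàg adapted real-valued process and suppose there exists a probability measure Q equivalent to P such that X is a martingale under Q with respect to (𝓕_t)_{t≥0}. Let T be a bounded stopping time with T > 0 a.s. admitting an announcing sequence (ρ_n), and suppose that both events {ΔX_T > 0} and {ΔX_T < 0} belong to ⋁_n 𝓕_{ρ_n}. Then ΔX_T = 0 P-almost surely. In particular, a price process admitting an equivalent martingale measure cannot exhibit predictable jumps. -/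
/-!
Optional sampling in continuous time (obtained from the discrete theorem at dyadic
approximations of the stopping times, using right-continuity of the paths and uniform
integrability) gives `X_{ρₙ ∧ T} = E_Q[X_T | 𝓕_{ρₙ}]`. Along the announcing sequence these values
converge to the left limit `X_{T-}`, and by Lévy's upward theorem they converge to
`E_Q[X_T | ⋁ₙ 𝓕_{ρₙ}]`. Hence `ΔX_T` integrates to zero over every set of `⋁ₙ 𝓕_{ρₙ}`; applied to
`{ΔX_T > 0}` and `{ΔX_T < 0}` this shows that both sets are `Q`-null, hence `P`-null.
-/

open MeasureTheory Filter Set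
open scoped NNReal Topology

namespace NNReal

noncomputable def dyadicCeil (k : ℕ) (s : ℝ≥0) : ℝ≥0 := ⌈s * 2 ^ k⌉₊ / 2 ^ k

lemma le_dyadicCeil (k : ℕ) (s : ℝ≥0) : s ≤ dyadicCeil k s := by
  rw [dyadicCeil, le_div_iff₀ (by positivity)]
  exact Nat.le_ceil _

lemma dyadicCeil_le (k : ℕ) (s : ℝ≥0) : dyadicCeil k s ≤ s + (2 ^ k)⁻¹ := by
  rw [dyadicCeil, div_le_iff₀ (by positivity), add_mul, inv_mul_cancel₀ (by positivity)]
  exact (Nat.ceil_lt_add_one zero_le).le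

lemma dyadicCeil_le_add_one_of_le {k : ℕ} {s C : ℝ≥0} (h : s ≤ C) : dyadicCeil k s ≤ C + 1 :=
  (dyadicCeil_le k s).trans <| add_le_add h (inv_le_one_of_one_le₀ (one_le_pow₀ one_le_two))

lemma monotone_dyadicCeil (k : ℕ) : Monotone (dyadicCeil k) := fun s t hst => by
  unfold dyadicCeil
  gcongr

lemma countable_range_dyadicCeil_comp {α : Type*} (k : ℕ) (τ : α → ℝ≥0) :
    (range fun a => (dyadicCeil k (τ a) : WithTop ℝ≥0)).Countable :=
  (countable_range fun n : ℕ => (((n : ℝ≥0) / 2 ^ k : ℝ≥0) : WithTop ℝ≥0)).mono <| by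
    rintro _ ⟨a, rfl⟩
    exact ⟨_, rfl⟩

lemma tendsto_dyadicCeil (s : ℝ≥0) : Tendsto (fun k => dyadicCeil k s) atTop (𝓝 s) := by
  have h : Tendsto (fun k : ℕ => s + (2 ^ k)⁻¹) atTop (𝓝 (s + 0)) :=
    tendsto_const_nhds.add <| by
      simpa only [← inv_pow] using NNReal.tendsto_pow_atTop_nhds_zero_of_lt_one
        (inv_lt_one_of_one_lt₀ one_lt_two)
  rw [add_zero] at h
  exact tendsto_of_tendsto_of_tendsto_of_le_of_le tendsto_const_nhds h
    (le_dyadicCeil · s) (dyadicCeil_le · s)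

end NNReal

open NNReal

lemma ContinuousWithinAt.tendsto_comp_of_ge {α β ι : Type*} [TopologicalSpace α] [PartialOrder α]
    [TopologicalSpace β] {f : α → β} {a : α} (hf : ContinuousWithinAt f (Ioi a) a)
    {l : Filter ι} {u : ι → α} (hu : Tendsto u l (𝓝 a)) (hau : ∀ i, a ≤ u i) :
    Tendsto (f ∘ u) l (𝓝 (f a)) :=
  (continuousWithinAt_Ioi_iff_Ici.mp hf).tendsto.comp
    (tendsto_nhdsWithin_of_tendsto_nhds_of_eventually_within u hu (Eventually.of_forall hau))

lemma MeasureTheory.IsStoppingTime.dyadicCeil {Ω : Type*} {m : MeasurableSpace Ω}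
    {F : Filtration ℝ≥0 m} {τ : Ω → ℝ≥0} (hτ : IsStoppingTime F (fun ω => (τ ω : WithTop ℝ≥0)))
    (k : ℕ) : IsStoppingTime F (fun ω => (NNReal.dyadicCeil k (τ ω) : WithTop ℝ≥0)) := by
  intro t
  have hset : {ω | (NNReal.dyadicCeil k (τ ω) : WithTop ℝ≥0) ≤ t} =
      {ω | (τ ω : WithTop ℝ≥0) ≤ ((⌊t * 2 ^ k⌋₊ / 2 ^ k : ℝ≥0) : WithTop ℝ≥0)} := by
    ext ω
    have h2k : (0 : ℝ≥0) < 2 ^ k := by positivity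
    simp only [mem_ofPred_eq, WithTop.coe_le_coe, NNReal.dyadicCeil, div_le_iff₀ h2k,
      le_div_iff₀ h2k]
    rw [← Nat.le_floor_iff zero_le, Nat.ceil_le]
  rw [hset]
  refine F.mono ?_ _ (hτ _)
  rw [div_le_iff₀ (by positivity)]
  exact Nat.floor_le zero_le

lemma MeasureTheory.StronglyAdapted.isStronglyProgressive_of_continuousWithinAt_Ioi
    {Ω β : Type*} {m : MeasurableSpace Ω} [TopologicalSpace β]
    [TopologicalSpace.PseudoMetrizableSpace β]
    {F : Filtration ℝ≥0 m} {X : ℝ≥0 → Ω → β} (hX : StronglyAdapted F X)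
    (hrc : ∀ ω t, ContinuousWithinAt (X · ω) (Ioi t) t) : IsStronglyProgressive F X := by
  intro i
  -- index the dyadic approximations by the discrete space `ℕ`, where joint measurability is free
  let Y (k n : ℕ) : Ω → β := X (min (n / 2 ^ k) i)
  have hY : ∀ k, StronglyMeasurable[Subtype.instMeasurableSpace.prod (F i)]
      fun p : Iic i × Ω => Y k ⌈(p.1 : ℝ≥0) * 2 ^ k⌉₊ p.2 := fun k => by
    have hU : StronglyMeasurable[MeasurableSpace.prod (inferInstance : MeasurableSpace ℕ) (F i)]
        (Function.uncurry (Y k)) :=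
      @stronglyMeasurable_uncurry_of_continuous_of_stronglyMeasurable Ω β ℕ _ _ _ _ _ _ _ (F i)
        (Y k) (fun _ => continuous_of_discreteTopology)
        fun _ => (hX _).mono (F.mono (min_le_right _ _))
    have hg : @Measurable (Iic i × Ω) (ℕ × Ω) (Subtype.instMeasurableSpace.prod (F i))
        (MeasurableSpace.prod (inferInstance : MeasurableSpace ℕ) (F i))
        fun p => (⌈(p.1 : ℝ≥0) * 2 ^ k⌉₊, p.2) := by
      refine @Measurable.prodMk _ (Subtype.instMeasurableSpace.prod (F i)) _ _ _ (F i) _ _ ?_ ?_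
      · exact ((measurable_subtype_coe.mul_const _).nat_ceil).comp measurable_fst
      · exact measurable_snd
    exact (hU.comp_measurable hg :)
  refine stronglyMeasurable_of_tendsto atTop hY (tendsto_pi_nhds.2 fun p => ?_)
  have hp : Tendsto (fun k => min (dyadicCeil k p.1) i) atTop (𝓝 (p.1 : ℝ≥0)) := by
    simpa [min_eq_left (mem_Iic.1 p.1.2)] using
      (tendsto_dyadicCeil (p.1 : ℝ≥0)).min (tendsto_const_nhds (x := i))
  exact (hrc p.2 p.1).tendsto_comp_of_ge hp fun k => le_min (le_dyadicCeil k _) p.1.2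

lemma MeasureTheory.tendsto_stoppedValue_dyadicCeil {Ω β : Type*} [TopologicalSpace β]
    {X : ℝ≥0 → Ω → β} (hrc : ∀ ω t, ContinuousWithinAt (X · ω) (Ioi t) t) (τ : Ω → ℝ≥0)
    (ω : Ω) :
    Tendsto (fun k => stoppedValue X (fun ω => (dyadicCeil k (τ ω) : WithTop ℝ≥0)) ω) atTop
      (𝓝 (stoppedValue X (fun ω => (τ ω : WithTop ℝ≥0)) ω)) :=
  (hrc ω (τ ω)).tendsto_comp_of_ge (tendsto_dyadicCeil _) (le_dyadicCeil · _)

namespace MeasureTheory.Martingale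

variable {Ω : Type*} {m : MeasurableSpace Ω} {μ : Measure Ω} [IsFiniteMeasure μ]
  {F : Filtration ℝ≥0 m} {X : ℝ≥0 → Ω → ℝ} {τ π : Ω → ℝ≥0} {C : ℝ≥0}

lemma uniformIntegrable_stoppedValue_dyadicCeil (hX : Martingale X F μ)
    (hτ : IsStoppingTime F (fun ω => (τ ω : WithTop ℝ≥0))) (hτC : ∀ ω, τ ω ≤ C) :
    UniformIntegrable
      (fun k => stoppedValue X (fun ω => (dyadicCeil k (τ ω) : WithTop ℝ≥0))) 1 μ :=
  -- each discretised stopped value is a conditional expectation of the single variable `X (C + 1)`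
  ((hX.integrable (C + 1)).uniformIntegrable_condExp
    fun k => (hτ.dyadicCeil k).measurableSpace_le).ae_eq fun k =>
    (hX.stoppedValue_ae_eq_condExp_of_le_const_of_countable_range (hτ.dyadicCeil k)
      (fun ω => WithTop.coe_le_coe.2 (dyadicCeil_le_add_one_of_le (hτC ω)))
      (countable_range_dyadicCeil_comp k τ)).symm

lemma integrable_stoppedValue_of_continuousWithinAt_Ioi
    (hX : Martingale X F μ) (hrc : ∀ ω t, ContinuousWithinAt (X · ω) (Ioi t) t)
    (hτ : IsStoppingTime F (fun ω => (τ ω : WithTop ℝ≥0))) (hτC : ∀ ω, τ ω ≤ C) :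
    Integrable (stoppedValue X (fun ω => (τ ω : WithTop ℝ≥0))) μ :=
  (hX.uniformIntegrable_stoppedValue_dyadicCeil hτ hτC).integrable_of_ae_tendsto
    (ae_of_all _ (tendsto_stoppedValue_dyadicCeil hrc τ))

lemma tendsto_setIntegral_stoppedValue_dyadicCeil
    (hX : Martingale X F μ) (hrc : ∀ ω t, ContinuousWithinAt (X · ω) (Ioi t) t)
    (hτ : IsStoppingTime F (fun ω => (τ ω : WithTop ℝ≥0))) (hτC : ∀ ω, τ ω ≤ C) (A : Set Ω) :
    Tendsto (fun k => ∫ x in A, stoppedValue X (fun ω => (dyadicCeil k (τ ω) : WithTop ℝ≥0)) x ∂μ)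
      atTop (𝓝 (∫ x in A, stoppedValue X (fun ω => (τ ω : WithTop ℝ≥0)) x ∂μ)) := by
  have hprog := hX.stronglyAdapted.isStronglyProgressive_of_continuousWithinAt_Ioi hrc
  have hUI := hX.uniformIntegrable_stoppedValue_dyadicCeil hτ hτC
  have hlim := ae_of_all μ (tendsto_stoppedValue_dyadicCeil hrc τ)
  -- Vitali: uniform integrability and pointwise convergence give convergence in `L¹`
  exact tendsto_setIntegral_of_L1' _
    ((measurable_stoppedValue hprog hτ).mono hτ.measurableSpace_le le_rfl).aestronglyMeasurable
    (Eventually.of_forall fun k => memLp_one_iff_integrable.1 (hUI.memLp k))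
    (tendsto_Lp_finite_of_tendsto_ae le_rfl ENNReal.one_ne_top hUI.1
      (hUI.memLp_of_ae_tendsto hlim) hUI.2.1 hlim) A

lemma setIntegral_stoppedValue_eq_of_le
    (hX : Martingale X F μ) (hrc : ∀ ω t, ContinuousWithinAt (X · ω) (Ioi t) t)
    (hτ : IsStoppingTime F (fun ω => (τ ω : WithTop ℝ≥0)))
    (hπ : IsStoppingTime F (fun ω => (π ω : WithTop ℝ≥0))) (hle : ∀ ω, τ ω ≤ π ω)
    (hπC : ∀ ω, π ω ≤ C) {A : Set Ω} (hA : MeasurableSet[hτ.measurableSpace] A) :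
    ∫ x in A, stoppedValue X (fun ω => (τ ω : WithTop ℝ≥0)) x ∂μ =
      ∫ x in A, stoppedValue X (fun ω => (π ω : WithTop ℝ≥0)) x ∂μ := by
  refine tendsto_nhds_unique ((hX.tendsto_setIntegral_stoppedValue_dyadicCeil hrc hτ
    (fun ω => (hle ω).trans (hπC ω)) A).congr fun k => ?_)
    (hX.tendsto_setIntegral_stoppedValue_dyadicCeil hrc hπ hπC A)
  have hτk := hτ.dyadicCeil k
  have hπk := hπ.dyadicCeil k
  have hA' : MeasurableSet[hτk.measurableSpace] A :=
    hτ.measurableSpace_mono hτk (fun ω => WithTop.coe_le_coe.2 (le_dyadicCeil k _)) A hA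
  have hOS := hX.stoppedValue_ae_eq_condExp_of_le_of_countable_range hπk hτk
    (fun ω => WithTop.coe_le_coe.2 (monotone_dyadicCeil k (hle ω)))
    (fun ω => WithTop.coe_le_coe.2 (dyadicCeil_le_add_one_of_le (hπC ω)))
    (countable_range_dyadicCeil_comp k π) (countable_range_dyadicCeil_comp k τ)
  calc ∫ x in A, stoppedValue X (fun ω => (dyadicCeil k (τ ω) : WithTop ℝ≥0)) x ∂μ
      = ∫ x in A, (μ[stoppedValue X (fun ω => (dyadicCeil k (π ω) : WithTop ℝ≥0)) |
          hτk.measurableSpace]) x ∂μ := integral_congr_ae (ae_restrict_of_ae hOS)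
    _ = ∫ x in A, stoppedValue X (fun ω => (dyadicCeil k (π ω) : WithTop ℝ≥0)) x ∂μ :=
      setIntegral_condExp hτk.measurableSpace_le
        (memLp_one_iff_integrable.1 ((hX.uniformIntegrable_stoppedValue_dyadicCeil hπ hπC).memLp k))
        hA'

lemma stoppedValue_min_ae_eq_condExp_of_continuousWithinAt_Ioi {ρ T : Ω → ℝ≥0}
    (hX : Martingale X F μ) (hrc : ∀ ω t, ContinuousWithinAt (X · ω) (Ioi t) t)
    (hρ : IsStoppingTime F (fun ω => (ρ ω : WithTop ℝ≥0)))
    (hT : IsStoppingTime F (fun ω => (T ω : WithTop ℝ≥0))) (hTC : ∀ ω, T ω ≤ C) :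
    stoppedValue X (fun ω => ((min (ρ ω) (T ω) : ℝ≥0) : WithTop ℝ≥0)) =ᵐ[μ]
      μ[stoppedValue X (fun ω => (T ω : WithTop ℝ≥0)) | hρ.measurableSpace] := by
  have hmin : IsStoppingTime F (fun ω => ((min (ρ ω) (T ω) : ℝ≥0) : WithTop ℝ≥0)) := hρ.min hT
  have hminC : ∀ ω, min (ρ ω) (T ω) ≤ C := fun ω => (min_le_right _ _).trans (hTC ω)
  have hmin_int := hX.integrable_stoppedValue_of_continuousWithinAt_Ioi hrc hmin hminC
  have hT_int := hX.integrable_stoppedValue_of_continuousWithinAt_Ioi hrc hT hTC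
  have hprog := hX.stronglyAdapted.isStronglyProgressive_of_continuousWithinAt_Ioi hrc
  refine ae_eq_condExp_of_forall_setIntegral_eq hρ.measurableSpace_le hT_int
    (fun _ _ _ => hmin_int.integrableOn) (fun A hA _ => ?_) ?_
  · -- split `A` according to whether `ρ ≤ T`; on the rest both stopped values agree
    have hρT : MeasurableSet {ω | (ρ ω : WithTop ℝ≥0) ≤ T ω} :=
      hρ.measurableSpace_le _ (hρ.measurableSet_le_stopping_time hT)
    rw [← integral_inter_add_sdiff hρT hmin_int.integrableOn,
      ← integral_inter_add_sdiff hρT hT_int.integrableOn]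
    congr 1
    · exact hX.setIntegral_stoppedValue_eq_of_le hrc hmin hT (fun ω => min_le_right _ _) hTC
        (hρ.measurableSet_inter_le hT A hA)
    · refine setIntegral_congr_fun ((hρ.measurableSpace_le _ hA).diff hρT) fun ω hω => ?_
      have hTρ : T ω ≤ ρ ω := le_of_not_ge fun h => hω.2 (WithTop.coe_le_coe.2 h)
      simp [stoppedValue, min_eq_right hTρ]
  · exact ((measurable_stoppedValue hprog hmin).mono
      (hmin.measurableSpace_mono hρ fun ω => WithTop.coe_le_coe.2 (min_le_left _ _))
      le_rfl).aestronglyMeasurable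

end MeasureTheory.Martingale

namespace MeasureTheory

variable {Ω : Type*} {m : MeasurableSpace Ω} {μ : Measure Ω}

def filtrationOfStoppingTimes {ι : Type*} [Preorder ι] {F : Filtration ι m}
    {σ : ℕ → Ω → WithTop ι} (hσ : ∀ n, IsStoppingTime F (σ n)) (hmono : Monotone σ) :
    Filtration ℕ m where
  seq n := (hσ n).measurableSpace
  mono' _ _ hnk := (hσ _).measurableSpace_mono (hσ _) (hmono hnk)
  le' n := (hσ n).measurableSpace_le

lemma ae_eq_condExp_iSup_of_tendsto [IsFiniteMeasure μ] {G : Filtration ℕ m} {g L : Ω → ℝ}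
    {Y : ℕ → Ω → ℝ} (hY : ∀ n, Y n =ᵐ[μ] μ[g | G n])
    (hYL : ∀ᵐ ω ∂μ, Tendsto (fun n => Y n ω) atTop (𝓝 (L ω))) :
    L =ᵐ[μ] μ[g | ⨆ n, G n] := by
  filter_upwards [tendsto_ae_condExp g, hYL, ae_all_iff.2 hY] with ω hLevy hlim hYω
  exact tendsto_nhds_unique hlim (hLevy.congr fun n => (hYω n).symm)

lemma measure_eq_zero_of_setIntegral_eq_zero_of_pos {f : Ω → ℝ} {s : Set Ω}
    (hf : IntegrableOn f s μ) (hs : MeasurableSet s) (hpos : ∀ x ∈ s, 0 < f x)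
    (h : ∫ x in s, f x ∂μ = 0) : μ s = 0 := by
  have hsupp : Function.support f ∩ s = s := inter_eq_right.2 fun x hx => (hpos x hx).ne'
  have := (setIntegral_pos_iff_support_of_nonneg_ae
    (ae_restrict_of_forall_mem hs fun x hx => (hpos x hx).le) hf).not
  rw [hsupp, h] at this
  simpa using this.1 (lt_irrefl 0)

lemma ae_sub_eq_zero_of_ae_eq_condExp {H : MeasurableSpace Ω} (hH : H ≤ m)
    [SigmaFinite (μ.trim hH)] {g h : Ω → ℝ} (hg : Integrable g μ) (hh : h =ᵐ[μ] μ[g | H])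
    (hpos : MeasurableSet[H] {ω | 0 < g ω - h ω}) (hneg : MeasurableSet[H] {ω | g ω - h ω < 0}) :
    ∀ᵐ ω ∂μ, g ω - h ω = 0 := by
  have hhint : Integrable h μ := integrable_condExp.congr hh.symm
  have hzero : ∀ A, MeasurableSet[H] A → ∫ ω in A, (g ω - h ω) ∂μ = 0 := fun A hA => by
    rw [integral_sub hg.integrableOn hhint.integrableOn, setIntegral_congr_ae (hH A hA)
      (hh.mono fun ω hω _ => hω), setIntegral_condExp hH hg hA, sub_self]
  have hpos0 := measure_eq_zero_of_setIntegral_eq_zero_of_pos (hg.sub hhint).integrableOn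
    (hH _ hpos) (fun ω hω => hω) (hzero _ hpos)
  have hneg0 := measure_eq_zero_of_setIntegral_eq_zero_of_pos (f := fun ω => -(g ω - h ω))
    (hg.sub hhint).neg.integrableOn (hH _ hneg) (fun ω hω => neg_pos.2 hω)
    (by rw [integral_neg, hzero _ hneg, neg_zero])
  refine measure_mono_null (fun ω hω => ?_) (measure_union_null hpos0 hneg0)
  exact (lt_or_gt_of_ne hω).symm

end MeasureTheory

theorem stmt14_general
    {Ω : Type*} {m : MeasurableSpace Ω}
    {P Q : Measure Ω} [IsProbabilityMeasure Q]
    (hPQ : P ≪ Q) (hQP : Q ≪ P)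
    (F : Filtration ℝ≥0 m)
    (X Xm : ℝ≥0 → Ω → ℝ)
    -- càdlàg paths: right-continuity and existence of (finite) left limits `Xm`
    (hrc : ∀ ω, ∀ t : ℝ≥0, Tendsto (fun s => X s ω) (𝓝[>] t) (𝓝 (X t ω)))
    (hll : ∀ ω, ∀ t : ℝ≥0, 0 < t → Tendsto (fun s => X s ω) (𝓝[<] t) (𝓝 (Xm t ω)))
    -- `X` is a martingale under `Q` with respect to `F`
    (hmart : Martingale X F Q)
    (T : Ω → ℝ≥0) (hT : IsStoppingTime F (fun ω => (T ω : WithTop ℝ≥0)))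
    (hTbdd : ∃ C : ℝ≥0, ∀ ω, T ω ≤ C)
    (hTpos : ∀ᵐ ω ∂P, 0 < T ω)
    -- announcing sequence for `T`
    (ρ : ℕ → Ω → ℝ≥0) (hρ : ∀ n, IsStoppingTime F (fun ω => (ρ n ω : WithTop ℝ≥0)))
    (hρmono : ∀ n, ∀ ω, ρ n ω ≤ ρ (n + 1) ω)
    (hρlt : ∀ᵐ ω ∂P, ∀ n, ρ n ω < T ω)
    (hρlim : ∀ᵐ ω ∂P, Tendsto (fun n => ρ n ω) atTop (𝓝 (T ω)))
    -- predictability of the direction of the jump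
    (hpos : MeasurableSet[⨆ n, (hρ n).measurableSpace]
      {ω | 0 < X (T ω) ω - Xm (T ω) ω})
    (hneg : MeasurableSet[⨆ n, (hρ n).measurableSpace]
      {ω | X (T ω) ω - Xm (T ω) ω < 0}) :
    ∀ᵐ ω ∂P, X (T ω) ω - Xm (T ω) ω = 0 := by
  obtain ⟨C, hC⟩ := hTbdd
  let G := filtrationOfStoppingTimes hρ
    (monotone_nat_of_le_succ fun n ω => WithTop.coe_le_coe.2 (hρmono n ω))
  have hOS : ∀ n, stoppedValue X (fun ω => ((min (ρ n ω) (T ω) : ℝ≥0) : WithTop ℝ≥0)) =ᵐ[Q]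
      Q[stoppedValue X (fun ω => (T ω : WithTop ℝ≥0)) | G n] := fun n =>
    hmart.stoppedValue_min_ae_eq_condExp_of_continuousWithinAt_Ioi hrc (hρ n) hT hC
  have hlim : ∀ᵐ ω ∂Q, Tendsto
      (fun n => stoppedValue X (fun ω => ((min (ρ n ω) (T ω) : ℝ≥0) : WithTop ℝ≥0)) ω) atTop
      (𝓝 (Xm (T ω) ω)) := by
    filter_upwards [hQP.ae_le hρlt, hQP.ae_le hρlim, hQP.ae_le hTpos] with ω hlt hρT hTω
    refine ((hll ω (T ω) hTω).comp (tendsto_nhdsWithin_of_tendsto_nhds_of_eventually_within _ hρT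
      (Eventually.of_forall hlt))).congr fun n => ?_
    exact congrArg (X · ω) (min_eq_left (hlt n).le).symm
  exact hPQ.ae_le (ae_sub_eq_zero_of_ae_eq_condExp (iSup_le G.le)
    (hmart.integrable_stoppedValue_of_continuousWithinAt_Ioi hrc hT hC)
    (ae_eq_condExp_iSup_of_tendsto hOS hlim) hpos hneg)

/-- A price process admitting an equivalent martingale measure
cannot exhibit predictable jumps: if `X` is a càdlàg adapted process which is a
martingale under some `Q ~ P`, `T` is a bounded, a.s. strictly positive stopping
time with announcing sequence `ρ`, and both `{ΔX_T > 0}` and `{ΔX_T < 0}` belong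
to `⋁ₙ 𝓕_{ρₙ}`, then `ΔX_T = 0` `P`-a.s. -/
theorem stmt14
    {Ω : Type*} {m : MeasurableSpace Ω}
    {P Q : Measure Ω} [IsProbabilityMeasure P] [IsProbabilityMeasure Q]
    (hPQ : P ≪ Q) (hQP : Q ≪ P)
    (F : Filtration ℝ≥0 m)
    (X Xm : ℝ≥0 → Ω → ℝ)
    (hadapted : Adapted F X)
    -- càdlàg paths: right-continuity and existence of (finite) left limits `Xm`
    (hrc : ∀ ω, ∀ t : ℝ≥0, Tendsto (fun s => X s ω) (𝓝[>] t) (𝓝 (X t ω)))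
    (hll : ∀ ω, ∀ t : ℝ≥0, 0 < t → Tendsto (fun s => X s ω) (𝓝[<] t) (𝓝 (Xm t ω)))
    -- `X` is a martingale under `Q` with respect to `F`
    (hmart : Martingale X F Q)
    (T : Ω → ℝ≥0) (hT : IsStoppingTime F (fun ω => (T ω : WithTop ℝ≥0)))
    (hTbdd : ∃ C : ℝ≥0, ∀ ω, T ω ≤ C)
    (hTpos : ∀ᵐ ω ∂P, 0 < T ω)
    -- announcing sequence for `T`
    (ρ : ℕ → Ω → ℝ≥0) (hρ : ∀ n, IsStoppingTime F (fun ω => (ρ n ω : WithTop ℝ≥0)))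
    (hρmono : ∀ n, ∀ ω, ρ n ω ≤ ρ (n + 1) ω)
    (hρlt : ∀ᵐ ω ∂P, ∀ n, ρ n ω < T ω)
    (hρlim : ∀ᵐ ω ∂P, Tendsto (fun n => ρ n ω) atTop (𝓝 (T ω)))
    -- predictability of the direction of the jump
    (hpos : MeasurableSet[⨆ n, (hρ n).measurableSpace]
      {ω | 0 < X (T ω) ω - Xm (T ω) ω})
    (hneg : MeasurableSet[⨆ n, (hρ n).measurableSpace]
      {ω | X (T ω) ω - Xm (T ω) ω < 0}) :
    ∀ᵐ ω ∂P, X (T ω) ω - Xm (T ω) ω = 0 :=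
  stmt14_general hPQ hQP F X Xm hrc hll hmart T hT hTbdd hTpos ρ hρ hρmono hρlt hρlim hpos hneg
end

section
/- Let X be a càdlàg adapted real-valued process with respect to a filtration satisfying the usual conditions, and let T be a strictly positive, finite-valued stopping time admitting an announcing sequence, such that ΔX_T ≠ 0 a.s. and {ΔX_T > 0} belongs to ⋁_n 𝓕_{ρ_n} for an announcing sequence (ρ_n) of T. Let N > 0 and C ≥ 1 be constants such that A := {T ≤ N, |X_{T−}| ≤ C, ΔX_T > 0} has P(A) > 0. Then there exist bounded stopping times σ_n ≤ τ_n and 𝓕_{σ_n}-measurable random variables ξ_n with ξ_n ∈ [0,1] a.s., such that: (i) for every t ≥ 0, ξ_n·(X_{τ_n∧t} − X_{σ_n∧t}) → ΔX_T·1_A·1_{T≤t} a.s. (a sure profit on A); and (ii) almost surely on A, for every n ≥ N, ξ_n·(X_{τ_n} − X_{σ_n}) ≥ −2C (the losses of each buy-and-hold component are uniformly bounded). -/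
open MeasureTheory Filter Set TopologicalSpace
open scoped NNReal Topology

/-!
Buy at `σₙ = ρₙ ∧ n` and sell at `τₙ = (ρₙ ∨ T) ∧ n`. Since `ρₙ ↑ T` strictly from below, the
gain of this trade up to time `t` tends to `ΔX_T · 1_{T ≤ t}` by the càdlàg property. The position
is `E[1_B | 𝓕_{σₙ}]` clipped to `[0, 1]`, where `B` is a `⋁ₙ 𝓕_{σₙ}`-measurable set that agrees
with `A` wherever `ρ` announces `T`: it reads off `T` and `X_{T−}` as limits along `σₙ`, and the
sign of the jump from predictability. By Lévy's upward theorem the position tends to `1_A`. It is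
further multiplied by `(C + 1 - X_{σₙ})⁺ ∧ 1`, which equals `1` at `X_{T−}` on `A` and vanishes
once `X_{σₙ} ≥ C + 1`; as `X_T ≥ -C` on `A`, this caps the loss of each trade by `2C`.
-/
namespace FlashStrategy

variable {Ω : Type*} {m : MeasurableSpace Ω}

noncomputable def ceilGrid (k : ℕ) (u : ℝ≥0) : ℝ≥0 := ⌈u * (k + 1)⌉₊ / (k + 1)

lemma le_ceilGrid (k : ℕ) (u : ℝ≥0) : u ≤ ceilGrid k u := by
  rw [ceilGrid, le_div_iff₀ (by positivity)]
  exact Nat.le_ceil _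

lemma ceilGrid_le (k : ℕ) (u : ℝ≥0) : ceilGrid k u ≤ u + 1 / (k + 1) := by
  rw [ceilGrid, div_le_iff₀ (by positivity), add_mul, one_div_mul_cancel (by positivity)]
  exact (Nat.ceil_lt_add_one (by positivity)).le

lemma tendsto_ceilGrid (u : ℝ≥0) : Tendsto (ceilGrid · u) atTop (𝓝 u) := by
  have h : Tendsto (fun k : ℕ => u + 1 / ((k : ℝ≥0) + 1)) atTop (𝓝 (u + 0)) :=
    tendsto_const_nhds.add tendsto_one_div_add_atTop_nhds_zero_nat
  rw [add_zero] at h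
  exact tendsto_of_tendsto_of_tendsto_of_le_of_le tendsto_const_nhds h (le_ceilGrid · u)
    (ceilGrid_le · u)

lemma monotone_ceilGrid (k : ℕ) : Monotone (ceilGrid k) := fun a b hab => by
  unfold ceilGrid
  gcongr

lemma countable_range_ceilGrid (k : ℕ) : (range (ceilGrid k)).Countable :=
  (countable_range fun n : ℕ => (n : ℝ≥0) / (k + 1)).mono
    (range_subset_iff.2 fun _ => mem_range_self (f := fun n : ℕ => (n : ℝ≥0) / (k + 1)) _)

variable {β : Type*} [TopologicalSpace β] [PseudoMetrizableSpace β] [SecondCountableTopology β]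
  [MeasurableSpace β] [OpensMeasurableSpace β]

lemma _root_.MeasureTheory.Adapted.stronglyMeasurable_comp_of_countable_range
    {ι : Type*} [Preorder ι] [MeasurableSpace ι] [MeasurableSingletonClass ι]
    {F : Filtration ι m} {u : ι → Ω → β} (hu : Adapted F u) {i : ι} {g : Set.Iic i → ι}
    (hg : Measurable g) (hgc : (range g).Countable) (hgi : ∀ s, g s ≤ i) :
    StronglyMeasurable[Subtype.instMeasurableSpace.prod (F i)]
      fun p : Set.Iic i × Ω => u (g p.1) p.2 := by
  have := hgc.to_subtype
  have hu' : Measurable[(F i).prod _] fun q : Ω × range g => u q.2 q.1 :=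
    measurable_from_prod_countable_left fun v => by
      obtain ⟨s, hs⟩ := v.2
      exact (hu v).mono (F.mono (hs ▸ hgi s)) le_rfl
  exact (hu'.comp ((@measurable_snd _ _ Subtype.instMeasurableSpace (F i)).prodMk
    ((hg.subtype_mk (h := mem_range_self)).comp
      (@measurable_fst _ _ Subtype.instMeasurableSpace (F i))))).stronglyMeasurable

theorem _root_.MeasureTheory.Adapted.isStronglyProgressive_of_rightContinuous
    {F : Filtration ℝ≥0 m} {u : ℝ≥0 → Ω → β} (hu : Adapted F u)
    (hrc : ∀ ω t, ContinuousWithinAt (u · ω) (Ici t) t) : IsStronglyProgressive F u := by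
  intro i
  refine stronglyMeasurable_of_tendsto (f := fun k (p : Set.Iic i × Ω) =>
    u (min (ceilGrid k p.1) i) p.2) atTop (fun k => ?_) ?_
  · refine hu.stronglyMeasurable_comp_of_countable_range
      (((monotone_ceilGrid k).measurable.comp measurable_subtype_coe).min measurable_const)
      (((countable_range_ceilGrid k).image (min · i)).mono ?_) fun _ => min_le_right _ _
    rintro _ ⟨s, rfl⟩
    exact ⟨ceilGrid k s, ⟨s, rfl⟩, rfl⟩
  · refine tendsto_pi_nhds.2 fun p => (hrc p.2 p.1).tendsto.comp ?_
    refine tendsto_nhdsWithin_iff.2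
      ⟨?_, Eventually.of_forall fun k => le_min (le_ceilGrid k _) p.1.2⟩
    simpa only [min_eq_left (mem_Iic.1 p.1.2)] using
      (tendsto_ceilGrid (p.1 : ℝ≥0)).min (tendsto_const_nhds (x := i))

variable {F : Filtration ℝ≥0 m}

lemma _root_.MeasureTheory.IsStoppingTime.measurableSpace_le_iSup_min_nat {τ : Ω → ℝ≥0}
    (hτ : IsStoppingTime F fun ω => (τ ω : WithTop ℝ≥0)) :
    hτ.measurableSpace ≤ ⨆ k : ℕ, (hτ.min_const (k : ℝ≥0)).measurableSpace := by
  intro s hs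
  have hcover : s = ⋃ k : ℕ, s ∩ {ω | (τ ω : WithTop ℝ≥0) ≤ ((k : ℝ≥0) : WithTop ℝ≥0)} := by
    ext ω
    obtain ⟨k, hk⟩ := exists_nat_ge (τ ω)
    simp only [mem_iUnion, mem_inter_iff, mem_ofPred_eq, WithTop.coe_le_coe]
    exact ⟨fun hω => ⟨k, hω, hk⟩, fun ⟨_, hω, _⟩ => hω⟩
  rw [hcover]
  exact .iUnion fun k => le_iSup (fun k : ℕ => (hτ.min_const (k : ℝ≥0)).measurableSpace) k _
    ((hτ.measurableSet_inter_le_const_iff s _).1 (hs.inter (hτ.measurableSet_le' _)))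

def stoppedFiltration {ι : Type*} [Preorder ι] {F : Filtration ι m} {τ : ℕ → Ω → WithTop ι}
    (hτ : ∀ n, IsStoppingTime F (τ n)) (hmono : Monotone τ) : Filtration ℕ m where
  seq n := (hτ n).measurableSpace
  mono' _ _ hab := IsStoppingTime.measurableSpace_mono _ _ (hmono hab)
  le' n := (hτ n).measurableSpace_le

variable {ρ : ℕ → Ω → ℝ≥0} {T : Ω → ℝ≥0}

def entryTime (ρ : ℕ → Ω → ℝ≥0) (n : ℕ) (ω : Ω) : ℝ≥0 := min (ρ n ω) n

def exitTime (ρ : ℕ → Ω → ℝ≥0) (T : Ω → ℝ≥0) (n : ℕ) (ω : Ω) : ℝ≥0 := min (max (ρ n ω) (T ω)) n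

lemma exitTime_eq {n : ℕ} {ω : Ω} (hρT : ρ n ω ≤ T ω) (hTn : T ω ≤ n) :
    exitTime ρ T n ω = T ω := by
  rw [exitTime, max_eq_right hρT, min_eq_left hTn]

lemma entryTime_le_exitTime (n : ℕ) (ω : Ω) : entryTime ρ n ω ≤ exitTime ρ T n ω :=
  min_le_min_right _ (le_max_left _ _)

lemma exitTime_le (n : ℕ) (ω : Ω) : exitTime ρ T n ω ≤ n := min_le_right _ _

lemma isStoppingTime_entryTime (hρ : ∀ n, IsStoppingTime F fun ω => (ρ n ω : WithTop ℝ≥0))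
    (n : ℕ) : IsStoppingTime F fun ω => (entryTime ρ n ω : WithTop ℝ≥0) := by
  simpa only [entryTime, WithTop.coe_min] using (hρ n).min_const (n : ℝ≥0)

lemma isStoppingTime_exitTime (hρ : ∀ n, IsStoppingTime F fun ω => (ρ n ω : WithTop ℝ≥0))
    (hT : IsStoppingTime F fun ω => (T ω : WithTop ℝ≥0)) (n : ℕ) :
    IsStoppingTime F fun ω => (exitTime ρ T n ω : WithTop ℝ≥0) := by
  simpa only [exitTime, WithTop.coe_min, WithTop.coe_max] using ((hρ n).max hT).min_const (n : ℝ≥0)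

lemma monotone_entryTime (hρ : Monotone ρ) :
    Monotone fun n ω => (entryTime ρ n ω : WithTop ℝ≥0) := fun _ _ hab ω =>
  WithTop.coe_le_coe.2 (min_le_min (hρ hab ω) (Nat.cast_le.2 hab))

lemma iSup_measurableSpace_le_iSup_entryTime
    (hρ : ∀ n, IsStoppingTime F fun ω => (ρ n ω : WithTop ℝ≥0)) (hmono : Monotone ρ) :
    ⨆ n, (hρ n).measurableSpace ≤ ⨆ n, (isStoppingTime_entryTime hρ n).measurableSpace := by
  refine iSup_le fun n => (hρ n).measurableSpace_le_iSup_min_nat.trans (iSup_le fun k => ?_)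
  refine (IsStoppingTime.measurableSpace_mono _ _ fun ω => ?_).trans
    (le_iSup (fun j => (isStoppingTime_entryTime hρ j).measurableSpace) (max n k))
  exact WithTop.coe_le_coe.2 (min_le_min (hmono (le_max_left n k) ω)
    (Nat.cast_le.2 (le_max_right n k)))

def IsAnnouncedAt (ρ : ℕ → Ω → ℝ≥0) (T : Ω → ℝ≥0) (ω : Ω) : Prop :=
  (∀ n, ρ n ω < T ω) ∧ Tendsto (ρ · ω) atTop (𝓝 (T ω))

namespace IsAnnouncedAt

variable {ω : Ω}

lemma pos (h : IsAnnouncedAt ρ T ω) : 0 < T ω := pos_of_gt (h.1 0)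

lemma eventually_eq (h : IsAnnouncedAt ρ T ω) :
    ∀ᶠ n : ℕ in atTop, entryTime ρ n ω = ρ n ω ∧ exitTime ρ T n ω = T ω :=
  (tendsto_natCast_atTop_atTop.eventually_ge_atTop (T ω)).mono fun n hn =>
    ⟨min_eq_left ((h.1 n).le.trans hn), exitTime_eq (h.1 n).le hn⟩

lemma tendsto_entryTime (h : IsAnnouncedAt ρ T ω) : Tendsto (entryTime ρ · ω) atTop (𝓝[<] T ω) :=
  tendsto_nhdsWithin_iff.2 ⟨h.2.congr' (h.eventually_eq.mono fun _ hn => hn.1.symm),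
    .of_forall fun n => (min_le_left _ _).trans_lt (h.1 n)⟩

lemma forall_entryTime_le_iff (h : IsAnnouncedAt ρ T ω) (N : ℝ≥0) :
    (∀ n, entryTime ρ n ω ≤ N) ↔ T ω ≤ N :=
  ⟨fun hN => le_of_tendsto' (tendsto_nhds_of_tendsto_nhdsWithin h.tendsto_entryTime) hN,
    fun hN n => ((min_le_left _ _).trans (h.1 n).le).trans hN⟩

lemma tendsto_gain (h : IsAnnouncedAt ρ T ω) {x : ℝ≥0 → ℝ} {l : ℝ}
    (hx : Tendsto x (𝓝[<] T ω) (𝓝 l)) (t : ℝ≥0) :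
    Tendsto (fun n => x (min (exitTime ρ T n ω) t) - x (min (entryTime ρ n ω) t)) atTop
      (𝓝 ((x (T ω) - l) * if T ω ≤ t then 1 else 0)) := by
  rcases le_or_gt (T ω) t with hTt | htT
  · rw [if_pos hTt, mul_one]
    refine (tendsto_const_nhds.sub (hx.comp h.tendsto_entryTime)).congr' ?_
    filter_upwards [h.eventually_eq] with n ⟨hσ, hτ⟩
    rw [Function.comp_apply, hτ, hσ, min_eq_left hTt, min_eq_left ((h.1 n).le.trans hTt)]
  · rw [if_neg htT.not_ge, mul_zero]
    refine tendsto_const_nhds.congr' ?_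
    filter_upwards [h.eventually_eq, h.2.eventually (eventually_gt_nhds htT)] with n ⟨hσ, hτ⟩ hρ
    rw [hτ, hσ, min_eq_right htT.le, min_eq_right hρ.le, sub_self]

end IsAnnouncedAt

lemma exists_measurableSet_iSup_entryTime_iff
    (hρ : ∀ n, IsStoppingTime F fun ω => (ρ n ω : WithTop ℝ≥0)) (hmono : Monotone ρ)
    {X Xm : ℝ≥0 → Ω → ℝ} (hX : IsStronglyProgressive F X)
    (hll : ∀ ω, ∀ t : ℝ≥0, 0 < t → Tendsto (X · ω) (𝓝[<] t) (𝓝 (Xm t ω)))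
    (hpred : MeasurableSet[⨆ n, (hρ n).measurableSpace] {ω | 0 < X (T ω) ω - Xm (T ω) ω})
    (N : ℝ≥0) (C : ℝ) :
    ∃ B : Set Ω, MeasurableSet[⨆ n, (isStoppingTime_entryTime hρ n).measurableSpace] B ∧
      ∀ ω, IsAnnouncedAt ρ T ω →
        (ω ∈ B ↔ T ω ≤ N ∧ |Xm (T ω) ω| ≤ C ∧ 0 < X (T ω) ω - Xm (T ω) ω) := by
  set 𝒢 := ⨆ n, (isStoppingTime_entryTime hρ n).measurableSpace
  have hle : ∀ n, (isStoppingTime_entryTime hρ n).measurableSpace ≤ 𝒢 :=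
    le_iSup fun j => (isStoppingTime_entryTime hρ j).measurableSpace
  have hXσ : ∀ n, StronglyMeasurable[𝒢] fun ω => X (entryTime ρ n ω) ω := fun n =>
    ((measurable_stoppedValue hX (isStoppingTime_entryTime hρ n)).mono (hle n)
      le_rfl).stronglyMeasurable
  refine ⟨(⋂ n, {ω | entryTime ρ n ω ≤ N}) ∩
      {ω | |limUnder atTop fun n => X (entryTime ρ n ω) ω| ≤ C} ∩ {ω | 0 < X (T ω) ω - Xm (T ω) ω},
    ?_, fun ω hω => ?_⟩
  · refine ((MeasurableSet.iInter fun n => hle n _ ?_).inter ?_).inter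
      (iSup_measurableSpace_le_iSup_entryTime hρ hmono _ hpred)
    · simpa only [WithTop.coe_le_coe] using (isStoppingTime_entryTime hρ n).measurableSet_le' N
    · exact measurableSet_le
        (@StronglyMeasurable.limUnder ℕ Ω ℝ 𝒢 _ _ atTop _ _ _ _ hXσ).measurable.abs measurable_const
  · have hlim : limUnder atTop (fun n => X (entryTime ρ n ω) ω) = Xm (T ω) ω :=
      ((hll ω _ hω.pos).comp hω.tendsto_entryTime).limUnder_eq
    simp only [mem_inter_iff, mem_iInter, mem_ofPred_eq, hlim, and_assoc]
    rw [hω.forall_entryTime_le_iff]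

def lossCap (C x : ℝ) : ℝ := min 1 (max 0 (C + 1 - x))

lemma lossCap_nonneg (C x : ℝ) : 0 ≤ lossCap C x := le_min zero_le_one (le_max_left _ _)

lemma lossCap_of_le {C x : ℝ} (hx : x ≤ C) : lossCap C x = 1 := by
  rw [lossCap, max_eq_right (by linarith), min_eq_left (by linarith)]

lemma neg_two_mul_le_mul_sub {C x y ξ : ℝ} (hC : 1 ≤ 2 * C) (hξ₀ : 0 ≤ ξ)
    (hξ : ξ ≤ lossCap C x) (hy : -C ≤ y) : -(2 * C) ≤ ξ * (y - x) := by
  have hξ₁ : ξ ≤ 1 := hξ.trans (min_le_left _ _)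
  have hξ₂ : ξ ≤ max 0 (C + 1 - x) := hξ.trans (min_le_right _ _)
  rcases le_total 0 (y - x) with hyx | hyx
  · nlinarith
  rcases le_or_gt x C with hx | hx
  · nlinarith
  rcases le_or_gt (C + 1) x with hx' | hx'
  · rw [max_eq_left (by linarith)] at hξ₂
    nlinarith
  · rw [max_eq_right (by linarith)] at hξ₂
    nlinarith [mul_le_mul_of_nonneg_right hξ₂ (by linarith : 0 ≤ x - y)]

def flashPosition (C e x : ℝ) : ℝ := max 0 (min 1 e) * lossCap C x

lemma flashPosition_nonneg (C e x : ℝ) : 0 ≤ flashPosition C e x :=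
  mul_nonneg (le_max_left _ _) (lossCap_nonneg C x)

lemma flashPosition_le_lossCap (C e x : ℝ) : flashPosition C e x ≤ lossCap C x :=
  mul_le_of_le_one_left (lossCap_nonneg C x) (max_le zero_le_one (min_le_left _ _))

lemma flashPosition_le_one (C e x : ℝ) : flashPosition C e x ≤ 1 :=
  (flashPosition_le_lossCap C e x).trans (min_le_left _ _)

lemma continuous_flashPosition (C : ℝ) : Continuous fun p : ℝ × ℝ => flashPosition C p.1 p.2 := by
  unfold flashPosition lossCap
  fun_prop

lemma flashPosition_indicator {α : Type*} {s t : Set α} {a : α} {C x : ℝ}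
    (hst : a ∈ s ↔ a ∈ t) (hx : a ∈ t → x ≤ C) :
    flashPosition C (s.indicator 1 a) x = t.indicator 1 a := by
  by_cases ha : a ∈ t
  · simp [indicator_of_mem ha, indicator_of_mem (hst.2 ha), flashPosition, lossCap_of_le (hx ha)]
  · simp [indicator_of_notMem ha, indicator_of_notMem (mt hst.1 ha), flashPosition]

end FlashStrategy

open FlashStrategy

theorem stmt16_general
    {Ω : Type*} {m : MeasurableSpace Ω} {P : Measure Ω} [IsProbabilityMeasure P]
    (F : Filtration ℝ≥0 m)
    (X Xm : ℝ≥0 → Ω → ℝ)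
    (hadapted : Adapted F X)
    -- càdlàg paths: right-continuity and existence of (finite) left limits `Xm`
    (hrc : ∀ ω, ∀ t : ℝ≥0, Tendsto (fun s => X s ω) (𝓝[>] t) (𝓝 (X t ω)))
    (hll : ∀ ω, ∀ t : ℝ≥0, 0 < t → Tendsto (fun s => X s ω) (𝓝[<] t) (𝓝 (Xm t ω)))
    (T : Ω → ℝ≥0) (hT : IsStoppingTime F (fun ω => (T ω : WithTop ℝ≥0)))
    -- announcing sequence for `T`
    (ρ : ℕ → Ω → ℝ≥0) (hρ : ∀ n, IsStoppingTime F (fun ω => (ρ n ω : WithTop ℝ≥0)))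
    (hρmono : ∀ n, ∀ ω, ρ n ω ≤ ρ (n + 1) ω)
    (hρlt : ∀ᵐ ω ∂P, ∀ n, ρ n ω < T ω)
    (hρlim : ∀ᵐ ω ∂P, Tendsto (fun n => ρ n ω) atTop (𝓝 (T ω)))
    -- the jump at `T` is a.s. nonzero and its sign is `⋁ₙ 𝓕_{ρₙ}`-measurable
    (hpred : MeasurableSet[⨆ n, (hρ n).measurableSpace]
      {ω | 0 < X (T ω) ω - Xm (T ω) ω})
    (N : ℝ≥0) (C : ℝ) (hC : 1 ≤ C)
    (A : Set Ω)
    (hA : A = {ω | T ω ≤ N ∧ |Xm (T ω) ω| ≤ C ∧ 0 < X (T ω) ω - Xm (T ω) ω}) :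
    ∃ (σ τ' : ℕ → Ω → ℝ≥0) (ξ : ℕ → Ω → ℝ) (hσ : ∀ n, IsStoppingTime F (fun ω => (σ n ω : WithTop ℝ≥0))),
      (∀ n, IsStoppingTime F (fun ω => (τ' n ω : WithTop ℝ≥0))) ∧
      (∀ n, ∃ Cb : ℝ≥0, ∀ ω, τ' n ω ≤ Cb) ∧
      (∀ n, ∀ ω, σ n ω ≤ τ' n ω) ∧
      (∀ n, Measurable[(hσ n).measurableSpace] (ξ n)) ∧
      (∀ n, ∀ᵐ ω ∂P, 0 ≤ ξ n ω ∧ ξ n ω ≤ 1) ∧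
      -- (i) sure profit on `A`
      (∀ t : ℝ≥0, ∀ᵐ ω ∂P,
        Tendsto (fun n =>
            ξ n ω * (X (min (τ' n ω) t) ω - X (min (σ n ω) t) ω)) atTop
          (𝓝 ((X (T ω) ω - Xm (T ω) ω) * A.indicator (fun _ => (1 : ℝ)) ω
            * (if T ω ≤ t then (1 : ℝ) else 0)))) ∧
      -- (ii) uniformly bounded losses on `A`
      (∀ᵐ ω ∂P, ω ∈ A → ∀ n : ℕ, N ≤ (n : ℝ≥0) →
        ξ n ω * (X (τ' n ω) ω - X (σ n ω) ω) ≥ -(2 * C)) := by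
  have hmono : Monotone ρ := monotone_nat_of_le_succ hρmono
  have hannounced : ∀ᵐ ω ∂P, IsAnnouncedAt ρ T ω := hρlt.and hρlim
  have hσ := isStoppingTime_entryTime hρ
  let 𝒢 := stoppedFiltration hσ (monotone_entryTime hmono)
  have hprog := hadapted.isStronglyProgressive_of_rightContinuous fun ω t =>
    continuousWithinAt_Ioi_iff_Ici.1 (hrc ω t)
  obtain ⟨B, hB, hBA⟩ := exists_measurableSet_iSup_entryTime_iff hρ hmono hprog hll hpred N C
  have hLevy : ∀ᵐ ω ∂P, Tendsto (fun n => P[B.indicator 1|𝒢 n] ω) atTop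
      (𝓝 (B.indicator 1 ω)) :=
    ((integrable_const (1 : ℝ)).indicator (iSup_le (fun n => (hσ n).measurableSpace_le) _ hB)
      ).tendsto_ae_condExp (stronglyMeasurable_const.indicator hB)
  refine ⟨entryTime ρ, exitTime ρ T,
    fun n ω => flashPosition C (P[B.indicator 1|𝒢 n] ω) (X (entryTime ρ n ω) ω), hσ,
    isStoppingTime_exitTime hρ hT, fun n => ⟨n, exitTime_le n⟩, entryTime_le_exitTime,
    fun n => ?_, fun n => .of_forall fun ω => ⟨flashPosition_nonneg .., flashPosition_le_one ..⟩,
    fun t => ?_, ?_⟩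
  · exact (continuous_flashPosition C).measurable.comp
      (stronglyMeasurable_condExp.measurable.prodMk (measurable_stoppedValue hprog (hσ n)))
  · filter_upwards [hannounced, hLevy] with ω hω hE
    have hXσ := (hll ω _ hω.pos).comp hω.tendsto_entryTime
    have hξ := ((continuous_flashPosition C).tendsto _).comp (hE.prodMk_nhds hXσ)
    have hlimit : flashPosition C (B.indicator 1 ω) (Xm (T ω) ω) = A.indicator 1 ω :=
      flashPosition_indicator (hA ▸ hBA ω hω) fun h => (abs_le.1 (hA ▸ h).2.1).2
    rw [hlimit] at hξ
    have := hξ.mul (hω.tendsto_gain (hll ω _ hω.pos) t)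
    rwa [mul_left_comm, ← mul_assoc] at this
  · subst hA
    filter_upwards [hannounced] with ω hω ⟨hTN, hXm, hΔ⟩ n hn
    rw [exitTime_eq (hω.1 n).le (hTN.trans hn)]
    exact neg_two_mul_le_mul_sub (by linarith) (flashPosition_nonneg ..)
      (flashPosition_le_lossCap ..) (by linarith [(abs_le.1 hXm).1])

/-- A predictable jump yields a sure profit via a flash
strategy whose buy-and-hold components have uniformly bounded losses: on
`A := {T ≤ N, |X_{T−}| ≤ C, ΔX_T > 0}` (of positive probability), there are
bounded stopping times `σₙ ≤ τₙ` and `𝓕_{σₙ}`-measurable positions `ξₙ ∈ [0,1]`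
whose gains converge a.s. to `ΔX_T·1_A·1_{T≤t}` for every `t ≥ 0`, and a.s. on
`A` the gains `ξₙ·(X_{τₙ} − X_{σₙ})` are bounded below by `−2C` for all `n ≥ N`. -/
theorem stmt16
    {Ω : Type*} {m : MeasurableSpace Ω} {P : Measure Ω} [IsProbabilityMeasure P]
    (F : Filtration ℝ≥0 m)
    -- usual conditions: right-continuity and completeness
    (husual_rc : ∀ t : ℝ≥0, F t = ⨅ (s : ℝ≥0) (_ : t < s), F s)
    (husual_compl : ∀ A : Set Ω, MeasurableSet A → P A = 0 → MeasurableSet[F 0] A)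
    (X Xm : ℝ≥0 → Ω → ℝ)
    (hadapted : Adapted F X)
    -- càdlàg paths: right-continuity and existence of (finite) left limits `Xm`
    (hrc : ∀ ω, ∀ t : ℝ≥0, Tendsto (fun s => X s ω) (𝓝[>] t) (𝓝 (X t ω)))
    (hll : ∀ ω, ∀ t : ℝ≥0, 0 < t → Tendsto (fun s => X s ω) (𝓝[<] t) (𝓝 (Xm t ω)))
    (T : Ω → ℝ≥0) (hT : IsStoppingTime F (fun ω => (T ω : WithTop ℝ≥0)))
    (hTpos : ∀ᵐ ω ∂P, 0 < T ω)
    -- announcing sequence for `T`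
    (ρ : ℕ → Ω → ℝ≥0) (hρ : ∀ n, IsStoppingTime F (fun ω => (ρ n ω : WithTop ℝ≥0)))
    (hρmono : ∀ n, ∀ ω, ρ n ω ≤ ρ (n + 1) ω)
    (hρlt : ∀ᵐ ω ∂P, ∀ n, ρ n ω < T ω)
    (hρlim : ∀ᵐ ω ∂P, Tendsto (fun n => ρ n ω) atTop (𝓝 (T ω)))
    -- the jump at `T` is a.s. nonzero and its sign is `⋁ₙ 𝓕_{ρₙ}`-measurable
    (hjump : ∀ᵐ ω ∂P, X (T ω) ω - Xm (T ω) ω ≠ 0)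
    (hpred : MeasurableSet[⨆ n, (hρ n).measurableSpace]
      {ω | 0 < X (T ω) ω - Xm (T ω) ω})
    (N : ℝ≥0) (hN : 0 < N) (C : ℝ) (hC : 1 ≤ C)
    (A : Set Ω)
    (hA : A = {ω | T ω ≤ N ∧ |Xm (T ω) ω| ≤ C ∧ 0 < X (T ω) ω - Xm (T ω) ω})
    (hApos : 0 < P A) :
    ∃ (σ τ' : ℕ → Ω → ℝ≥0) (ξ : ℕ → Ω → ℝ) (hσ : ∀ n, IsStoppingTime F (fun ω => (σ n ω : WithTop ℝ≥0))),
      (∀ n, IsStoppingTime F (fun ω => (τ' n ω : WithTop ℝ≥0))) ∧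
      (∀ n, ∃ Cb : ℝ≥0, ∀ ω, τ' n ω ≤ Cb) ∧
      (∀ n, ∀ ω, σ n ω ≤ τ' n ω) ∧
      (∀ n, Measurable[(hσ n).measurableSpace] (ξ n)) ∧
      (∀ n, ∀ᵐ ω ∂P, 0 ≤ ξ n ω ∧ ξ n ω ≤ 1) ∧
      -- (i) sure profit on `A`
      (∀ t : ℝ≥0, ∀ᵐ ω ∂P,
        Tendsto (fun n =>
            ξ n ω * (X (min (τ' n ω) t) ω - X (min (σ n ω) t) ω)) atTop
          (𝓝 ((X (T ω) ω - Xm (T ω) ω) * A.indicator (fun _ => (1 : ℝ)) ω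
            * (if T ω ≤ t then (1 : ℝ) else 0)))) ∧
      -- (ii) uniformly bounded losses on `A`
      (∀ᵐ ω ∂P, ω ∈ A → ∀ n : ℕ, N ≤ (n : ℝ≥0) →
        ξ n ω * (X (τ' n ω) ω - X (σ n ω) ω) ≥ -(2 * C)) :=
  stmt16_general F X Xm hadapted hrc hll T hT ρ hρ hρmono hρlt hρlim hpred N C hC A hA
end
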